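/- arXiv:2311.10055 — 10 statements merged into one kernel-verified Lean document; each statement's English description precedes it below -/
import Mathlib

section
/- For parallel demands p, q (demands that do not cross), either V(q⁺)⊆V(p⁺), or V(q⁺)⊆V(p⁻), or V(q⁻)⊆V(p⁺), or V(q⁻)⊆V(p⁻), or e(p)=e(q). -/
open Finset

/-- A demand `(i,j)` with `1 ≤ i < j ≤ n` on the cycle with nodes `1,…,n`. -/
structure Demand (n : ℕ) where
  i : ℕ
  j : ℕ
  h1i : 1 ≤ i
  hij : i < j
  hjn : j ≤ n

namespace Demand

variable {n : ℕ}

instance : DecidableEq (Demand n) := fun p q =>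
  if h : p.i = q.i ∧ p.j = q.j then
    .isTrue (by cases p; cases q; simp_all)
  else
    .isFalse (by rintro rfl; simp_all)

/-- Arcs are labeled `1,…,n`; arc `k` joins node `k` to node `k+1` (arc `n` joins `n` to `1`).
The arcs of the route `p⁺ = [i,j]` (avoiding arc `n`). -/
def arcPlus (p : Demand n) : Set ℕ := {k | p.i ≤ k ∧ k < p.j}

/-- The arcs of the route `p⁻ = [j,i]` (through arc `n`). -/
def arcMinus (p : Demand n) : Set ℕ := {k | (1 ≤ k ∧ k < p.i) ∨ (p.j ≤ k ∧ k ≤ n)}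

/-- The vertex set of the route `p⁺ = [i,j]`. -/
def VPlus (p : Demand n) : Set ℕ := {v | p.i ≤ v ∧ v ≤ p.j}

/-- The vertex set of the route `p⁻ = [j,i]`. -/
def VMinus (p : Demand n) : Set ℕ := {v | (1 ≤ v ∧ v ≤ p.i) ∨ (p.j ≤ v ∧ v ≤ n)}

/-- The set of ends of a demand. -/
def ends (p : Demand n) : Set ℕ := {p.i, p.j}

/-- Demands `p` and `q` cross if `p` has exactly one end in each of the two routes of `q`. -/
def Cross (p q : Demand n) : Prop :=
  (p.ends ∩ q.VPlus).ncard = 1 ∧ (p.ends ∩ q.VMinus).ncard = 1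

/-- The arcs of the route chosen by `b` (`true` = `p⁺`, `false` = `p⁻`).
A routing of a set of demands is a function `r : Demand n → Bool`. -/
def arcs (p : Demand n) (b : Bool) : Set ℕ := if b then p.arcPlus else p.arcMinus

end Demand

open Demand

/-- Two parallel demands collide in the routing `r`: their chosen routes share an arc and
together cover all the arcs of the cycle. -/
def Collide {n : ℕ} (r : Demand n → Bool) (p q : Demand n) : Prop :=
  ¬ Cross p q ∧ (p.arcs (r p) ∩ q.arcs (r q)).Nonempty ∧
    p.arcs (r p) ∪ q.arcs (r q) = Set.Icc 1 n

open scoped Classical in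
/-- The maximum weight `ω(H_r, w)` of a clique of the intersection graph `H_r` of the
routing `r` of the demand set `D` (vertices: chosen routes; adjacency: sharing an arc). -/
noncomputable def cliqueNum {n : ℕ} (D : Finset (Demand n)) (r : Demand n → Bool)
    (w : Demand n → ℕ) : ℕ :=
  (D.powerset.filter fun C =>
      ∀ p ∈ C, ∀ q ∈ C, p ≠ q → ((p : Demand n).arcs (r p) ∩ q.arcs (r q)).Nonempty).sup
    fun C => ∑ p ∈ C, w p

/-- For parallel demands `p, q`, one of the routes of `q` is contained
(vertex-wise) in one of the routes of `p`, unless `p` and `q` are multiples. -/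
theorem parallel_containment {n : ℕ} (p q : Demand n) (hpar : ¬ Cross p q) :
    q.VPlus ⊆ p.VPlus ∨ q.VPlus ⊆ p.VMinus ∨ q.VMinus ⊆ p.VPlus ∨
      q.VMinus ⊆ p.VMinus ∨ p.ends = q.ends := by
  have hpi := p.h1i
  have hpij := p.hij
  have hpn := p.hjn
  have hqi := q.h1i
  have hqij := q.hij
  have hqn := q.hjn
  by_cases h1 : p.j ≤ q.i
  · right; left
    intro v hv
    simp only [VPlus, VMinus, Set.mem_setOf_eq] at *
    omega
  · by_cases h2 : q.j ≤ p.i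
    · right; left
      intro v hv
      simp only [VPlus, VMinus, Set.mem_setOf_eq] at *
      omega
    · by_cases h3 : p.i ≤ q.i ∧ q.j ≤ p.j
      · left
        intro v hv
        simp only [VPlus, Set.mem_setOf_eq] at *
        omega
      · by_cases h4 : q.i ≤ p.i ∧ p.j ≤ q.j
        · right; right; right; left
          intro v hv
          simp only [VPlus, VMinus, Set.mem_setOf_eq] at *
          omega
        · exfalso
          apply hpar
          by_cases h5 : q.i < p.i
          · -- q.i < p.i < q.j < p.j : p.i in q.VPlus only, p.j in q.VMinus only
            have e1 : p.ends ∩ q.VPlus = {p.i} := by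
              ext v
              simp only [ends, VPlus, Set.mem_inter_iff, Set.mem_insert_iff,
                Set.mem_singleton_iff, Set.mem_setOf_eq]
              omega
            have e2 : p.ends ∩ q.VMinus = {p.j} := by
              ext v
              simp only [ends, VMinus, Set.mem_inter_iff, Set.mem_insert_iff,
                Set.mem_singleton_iff, Set.mem_setOf_eq]
              omega
            exact ⟨by rw [e1]; exact Set.ncard_singleton _,
                   by rw [e2]; exact Set.ncard_singleton _⟩
          · -- p.i < q.i < p.j < q.j
            have e1 : p.ends ∩ q.VPlus = {p.j} := by
              ext v
              simp only [ends, VPlus, Set.mem_inter_iff, Set.mem_insert_iff,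
                Set.mem_singleton_iff, Set.mem_setOf_eq]
              omega
            have e2 : p.ends ∩ q.VMinus = {p.i} := by
              ext v
              simp only [ends, VMinus, Set.mem_inter_iff, Set.mem_insert_iff,
                Set.mem_singleton_iff, Set.mem_setOf_eq]
              omega
            exact ⟨by rw [e1]; exact Set.ncard_singleton _,
                   by rw [e2]; exact Set.ncard_singleton _⟩
end

section
/- Let p, q be parallel demands colliding in a routing R, i.e., the arc sets of R_p and R_q intersect and their union is the whole arc set of the cycle. Let R' be obtained from R by reversing both routes (R'_p is the complementary route of R_p, R'_q the complementary route of R_q). Then the maximum clique size of the intersection graph of R' is at most that of R. -/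
open Finset

open Demand

lemma arcs_subset {n : ℕ} (p : Demand n) (b : Bool) : p.arcs b ⊆ Set.Icc 1 n := by
  have h1 := p.h1i; have h2 := p.hij; have h3 := p.hjn
  cases b <;> intro k hk <;>
    simp only [Demand.arcs, Demand.arcPlus, Demand.arcMinus, if_true, if_false,
      Set.mem_setOf_eq, Set.mem_Icc, Bool.false_eq_true] at hk ⊢ <;> omega

lemma arcs_compl {n : ℕ} (p : Demand n) (b : Bool) :
    p.arcs (!b) = Set.Icc 1 n \ p.arcs b := by
  have h1 := p.h1i; have h2 := p.hij; have h3 := p.hjn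
  ext k
  cases b <;>
    simp only [Demand.arcs, Demand.arcPlus, Demand.arcMinus, Bool.not_true, Bool.not_false,
      if_true, if_false, Set.mem_setOf_eq, Set.mem_diff, Set.mem_Icc, Bool.false_eq_true] <;> omega

/-- Reversing both routes of a colliding pair of parallel demands does not
increase the maximum clique size of the intersection graph (uniform weights). -/
theorem reverse_collision_le {n : ℕ} (D : Finset (Demand n)) (r : Demand n → Bool)
    (p q : Demand n) (hp : p ∈ D) (hq : q ∈ D) (hcol : Collide r p q) :
    cliqueNum D (Function.update (Function.update r p (!r p)) q (!r q)) (fun _ => 1) ≤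
      cliqueNum D r (fun _ => 1) := by
  classical
  obtain ⟨-, hne, huniv⟩ := hcol
  have hpq : p ≠ q := by
    rintro rfl
    have h1 : p.arcs (r p) = Set.Icc 1 n := by rw [← huniv]; simp
    have hi1 := p.h1i; have hij := p.hij; have hjn := p.hjn
    cases hb : r p
    · have hmem : p.i ∈ Set.Icc (1:ℕ) n := ⟨hi1, by omega⟩
      rw [← h1] at hmem
      simp only [Demand.arcs, hb, if_false, Demand.arcMinus, Set.mem_setOf_eq,
        Bool.false_eq_true] at hmem
      omega
    · have hmem : n ∈ Set.Icc (1:ℕ) n := ⟨by omega, le_refl n⟩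
      rw [← h1] at hmem
      simp only [Demand.arcs, hb, if_true, Demand.arcPlus, Set.mem_setOf_eq] at hmem
      omega
  set r' := Function.update (Function.update r p (!r p)) q (!r q) with hr'
  have hr'p : r' p = !r p := by
    simp [hr', Function.update_apply, hpq]
  have hr'q : r' q = !r q := by simp [hr']
  have hr'o : ∀ d, d ≠ p → d ≠ q → r' d = r d := by
    intro d h1 h2; simp [hr', Function.update_apply, h1, h2]
  have hps : p.arcs (!(r p)) ⊆ q.arcs (r q) := by
    rw [arcs_compl]; intro k hk
    have hk2 : k ∈ p.arcs (r p) ∪ q.arcs (r q) := huniv ▸ hk.1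
    rcases hk2 with h | h
    · exact absurd h hk.2
    · exact h
  have hqs : q.arcs (!(r q)) ⊆ p.arcs (r p) := by
    rw [arcs_compl]; intro k hk
    have hk2 : k ∈ p.arcs (r p) ∪ q.arcs (r q) := huniv ▸ hk.1
    rcases hk2 with h | h
    · exact h
    · exact absurd h hk.2
  have hdisj : ¬ (p.arcs (!(r p)) ∩ q.arcs (!(r q))).Nonempty := by
    rintro ⟨k, hk1, hk2⟩
    rw [arcs_compl] at hk1 hk2
    have hk3 : k ∈ p.arcs (r p) ∪ q.arcs (r q) := huniv ▸ hk1.1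
    rcases hk3 with h | h
    · exact hk1.2 h
    · exact hk2.2 h
  -- key step: transform cliques
  have key : ∀ C : Finset (Demand n), C ⊆ D →
      (∀ a ∈ C, ∀ b ∈ C, a ≠ b → (a.arcs (r' a) ∩ b.arcs (r' b)).Nonempty) →
      ∃ C' : Finset (Demand n), C' ⊆ D ∧
        (∀ a ∈ C', ∀ b ∈ C', a ≠ b → (a.arcs (r a) ∩ b.arcs (r b)).Nonempty) ∧
        C.card ≤ C'.card := by
    intro C hCD hCl
    by_cases hpC : p ∈ C
    · have hqC : q ∉ C := by
        intro hqC
        have := hCl p hpC q hqC hpq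
        rw [hr'p, hr'q] at this
        exact hdisj this
      refine ⟨insert q (C.erase p), ?_, ?_, ?_⟩
      · intro a ha
        rcases Finset.mem_insert.1 ha with rfl | ha
        · exact hq
        · exact hCD (Finset.mem_of_mem_erase ha)
      · intro a ha b hb hab
        rcases Finset.mem_insert.1 ha with hea | ha2 <;>
          rcases Finset.mem_insert.1 hb with heb | hb2
        · exact absurd (hea.trans heb.symm) hab
        · -- a = q, b ∈ C.erase p
          rw [hea]
          have hbp : b ≠ p := Finset.ne_of_mem_erase hb2
          have hbq : b ≠ q := by rintro rfl; exact hqC (Finset.mem_of_mem_erase hb2)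
          have hbC := Finset.mem_of_mem_erase hb2
          obtain ⟨k, hk1, hk2⟩ := hCl p hpC b hbC (Ne.symm hbp)
          rw [hr'p] at hk1
          rw [hr'o b hbp hbq] at hk2
          exact ⟨k, hps hk1, hk2⟩
        · rw [heb]
          have hap : a ≠ p := Finset.ne_of_mem_erase ha2
          have haq : a ≠ q := by rintro rfl; exact hqC (Finset.mem_of_mem_erase ha2)
          have haC := Finset.mem_of_mem_erase ha2
          obtain ⟨k, hk1, hk2⟩ := hCl p hpC a haC (Ne.symm hap)
          rw [hr'p] at hk1
          rw [hr'o a hap haq] at hk2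
          exact ⟨k, hk2, hps hk1⟩
        · have hap : a ≠ p := Finset.ne_of_mem_erase ha2
          have haq : a ≠ q := by rintro rfl; exact hqC (Finset.mem_of_mem_erase ha2)
          have hbp : b ≠ p := Finset.ne_of_mem_erase hb2
          have hbq : b ≠ q := by rintro rfl; exact hqC (Finset.mem_of_mem_erase hb2)
          have := hCl a (Finset.mem_of_mem_erase ha2) b (Finset.mem_of_mem_erase hb2) hab
          rwa [hr'o a hap haq, hr'o b hbp hbq] at this
      · have hqE : q ∉ C.erase p := fun h => hqC (Finset.mem_of_mem_erase h)
        rw [Finset.card_insert_of_notMem hqE, Finset.card_erase_of_mem hpC]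
        have : 1 ≤ C.card := Finset.card_pos.2 ⟨p, hpC⟩
        omega
    · by_cases hqC : q ∈ C
      · refine ⟨insert p (C.erase q), ?_, ?_, ?_⟩
        · intro a ha
          rcases Finset.mem_insert.1 ha with rfl | ha3
          · exact hp
          · exact hCD (Finset.mem_of_mem_erase ha3)
        · intro a ha b hb hab
          rcases Finset.mem_insert.1 ha with hea | ha2 <;>
            rcases Finset.mem_insert.1 hb with heb | hb2
          · exact absurd (hea.trans heb.symm) hab
          · rw [hea]
            have hbq : b ≠ q := Finset.ne_of_mem_erase hb2
            have hbp : b ≠ p := by rintro rfl; exact hpC (Finset.mem_of_mem_erase hb2)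
            have hbC := Finset.mem_of_mem_erase hb2
            obtain ⟨k, hk1, hk2⟩ := hCl q hqC b hbC (Ne.symm hbq)
            rw [hr'q] at hk1
            rw [hr'o b hbp hbq] at hk2
            exact ⟨k, hqs hk1, hk2⟩
          · rw [heb]
            have haq : a ≠ q := Finset.ne_of_mem_erase ha2
            have hap : a ≠ p := by rintro rfl; exact hpC (Finset.mem_of_mem_erase ha2)
            have haC := Finset.mem_of_mem_erase ha2
            obtain ⟨k, hk1, hk2⟩ := hCl q hqC a haC (Ne.symm haq)
            rw [hr'q] at hk1
            rw [hr'o a hap haq] at hk2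
            exact ⟨k, hk2, hqs hk1⟩
          · have haq : a ≠ q := Finset.ne_of_mem_erase ha2
            have hap : a ≠ p := by rintro rfl; exact hpC (Finset.mem_of_mem_erase ha2)
            have hbq : b ≠ q := Finset.ne_of_mem_erase hb2
            have hbp : b ≠ p := by rintro rfl; exact hpC (Finset.mem_of_mem_erase hb2)
            have := hCl a (Finset.mem_of_mem_erase ha2) b (Finset.mem_of_mem_erase hb2) hab
            rwa [hr'o a hap haq, hr'o b hbp hbq] at this
        · have hpE : p ∉ C.erase q := fun h => hpC (Finset.mem_of_mem_erase h)
          rw [Finset.card_insert_of_notMem hpE, Finset.card_erase_of_mem hqC]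
          have : 1 ≤ C.card := Finset.card_pos.2 ⟨q, hqC⟩
          omega
      · refine ⟨C, hCD, ?_, le_refl _⟩
        intro a ha b hb hab
        have hap : a ≠ p := by rintro rfl; exact hpC ha
        have haq : a ≠ q := by rintro rfl; exact hqC ha
        have hbp : b ≠ p := by rintro rfl; exact hpC hb
        have hbq : b ≠ q := by rintro rfl; exact hqC hb
        have := hCl a ha b hb hab
        rwa [hr'o a hap haq, hr'o b hbp hbq] at this
  rw [cliqueNum, cliqueNum]
  apply Finset.sup_le
  intro C hC
  simp only [Finset.mem_filter, Finset.mem_powerset] at hC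
  obtain ⟨hCD, hCl⟩ := hC
  obtain ⟨C', hC'D, hC'cl, hcard⟩ := key C hCD hCl
  calc (∑ _x ∈ C, 1) = C.card := (Finset.card_eq_sum_ones C).symm
    _ ≤ C'.card := hcard
    _ = ∑ _x ∈ C', 1 := Finset.card_eq_sum_ones C'
    _ ≤ _ := by
      refine Finset.le_sup (f := fun C => ∑ _p ∈ C, (1:ℕ)) ?_
      rw [Finset.filter_congr_decidable, Finset.mem_filter]
      exact ⟨Finset.mem_powerset.2 hC'D, hC'cl⟩
end

section
/- For uniform weights, the Minimum Clique Routing Problem on Cycles admits an optimal routing without collisions: there exists a routing R of D minimizing the maximum clique size of H_R over all routings, such that no two parallel demands collide in R. -/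
open Finset

open Demand

section Aux

variable {n : ℕ}

/-- length of the chosen route (plus: `j-i`, minus: `n-(j-i)`). -/
def rlen (d : Demand n) (b : Bool) : ℕ := if b then d.j - d.i else n - (d.j - d.i)

lemma rlen_le (d : Demand n) (b : Bool) : rlen d b ≤ n := by
  have := d.hjn; have := d.hij; have := d.h1i
  unfold rlen; split <;> omega

/-- sum of route lengths of a routing. -/
def arcSum (D : Finset (Demand n)) (r : Demand n → Bool) : ℕ := ∑ d ∈ D, rlen d (r d)

lemma arcSum_lt (D : Finset (Demand n)) (r : Demand n → Bool) :
    arcSum D r < D.card * n + 1 := by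
  have h : arcSum D r ≤ D.card • n := Finset.sum_le_card_nsmul D _ n (fun d _ => rlen_le d _)
  rw [smul_eq_mul] at h
  omega

/-- the combined measure: clique number dominant, then total route length. -/
noncomputable def meas (D : Finset (Demand n)) (r : Demand n → Bool) : ℕ :=
  cliqueNum D r (fun _ => 1) * (D.card * n + 1) + arcSum D r

lemma card_le_cliqueNum (D : Finset (Demand n)) (r : Demand n → Bool)
    (C : Finset (Demand n)) (hC : C ⊆ D)
    (hcl : ∀ p ∈ C, ∀ q ∈ C, p ≠ q → ((p : Demand n).arcs (r p) ∩ q.arcs (r q)).Nonempty) :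
    C.card ≤ cliqueNum D r (fun _ => 1) := by
  classical
  unfold cliqueNum
  rw [Finset.filter_congr_decidable]
  have h1 : C.card ≤ (fun C : Finset (Demand n) => ∑ p ∈ C, (fun _ : Demand n => (1 : ℕ)) p) C := by
    simp
  refine le_trans h1 (Finset.le_sup
    (f := fun C : Finset (Demand n) => ∑ p ∈ C, (fun _ : Demand n => (1 : ℕ)) p) (b := C) ?_)
  exact Finset.mem_filter.mpr ⟨Finset.mem_powerset.mpr hC, hcl⟩

lemma cliqueNum_le (D : Finset (Demand n)) (r : Demand n → Bool) (m : ℕ)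
    (h : ∀ C : Finset (Demand n), C ⊆ D →
      (∀ p ∈ C, ∀ q ∈ C, p ≠ q → ((p : Demand n).arcs (r p) ∩ q.arcs (r q)).Nonempty) →
      C.card ≤ m) :
    cliqueNum D r (fun _ => 1) ≤ m := by
  classical
  unfold cliqueNum
  rw [Finset.filter_congr_decidable]
  refine Finset.sup_le fun C hC => ?_
  obtain ⟨hC1, hC2⟩ := Finset.mem_filter.mp hC
  simpa using h C (Finset.mem_powerset.mp hC1) hC2

/-- Key exchange lemma: rerouting `p` and `q` so that the new routes are disjoint
and each contained in the partner's old route does not increase the clique number. -/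
lemma key (D : Finset (Demand n)) (r : Demand n → Bool) (p q : Demand n)
    (hp : p ∈ D) (hq : q ∈ D) (hpq : p ≠ q) (b c : Bool)
    (hdisj : ∀ x, x ∈ p.arcs b → x ∉ q.arcs c)
    (h1 : p.arcs b ⊆ q.arcs (r q)) (h2 : q.arcs c ⊆ p.arcs (r p)) :
    cliqueNum D (Function.update (Function.update r p b) q c) (fun _ => 1)
      ≤ cliqueNum D r (fun _ => 1) := by
  classical
  set r2 := Function.update (Function.update r p b) q c with hr2
  have hr2p : r2 p = b := by
    rw [hr2, Function.update_of_ne hpq, Function.update_self]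
  have hr2q : r2 q = c := by rw [hr2, Function.update_self]
  have hr2o : ∀ s, s ≠ p → s ≠ q → r2 s = r s := by
    intro s hsp hsq; rw [hr2, Function.update_of_ne hsq, Function.update_of_ne hsp]
  apply cliqueNum_le
  intro C hC hcl
  by_cases hpC : p ∈ C
  · by_cases hqC : q ∈ C
    · have h := hcl p hpC q hqC hpq
      rw [hr2p, hr2q] at h
      obtain ⟨x, hx⟩ := h
      exact absurd hx.2 (hdisj x hx.1)
    · -- p ∈ C, q ∉ C : replace p by q (with its old route)
      have key1 : ∀ u ∈ C.erase p, ((u : Demand n).arcs (r u) ∩ q.arcs (r q)).Nonempty := by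
        intro u hu
        have hup : u ≠ p := Finset.ne_of_mem_erase hu
        have huq : u ≠ q := fun h => hqC (h ▸ Finset.mem_of_mem_erase hu)
        have h := hcl u (Finset.mem_of_mem_erase hu) p hpC hup
        rw [hr2o u hup huq, hr2p] at h
        obtain ⟨x, hx⟩ := h
        exact ⟨x, hx.1, h1 hx.2⟩
      have hsub : insert q (C.erase p) ⊆ D := by
        intro x hx
        rcases Finset.mem_insert.mp hx with rfl | hx'
        · exact hq
        · exact hC (Finset.mem_of_mem_erase hx')
      have hclq : ∀ s ∈ insert q (C.erase p), ∀ t ∈ insert q (C.erase p), s ≠ t →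
          ((s : Demand n).arcs (r s) ∩ t.arcs (r t)).Nonempty := by
        intro s hs t ht hst
        rcases Finset.mem_insert.mp hs with rfl | hs'
        · rcases Finset.mem_insert.mp ht with rfl | ht'
          · exact absurd rfl hst
          · obtain ⟨x, hx⟩ := key1 t ht'
            exact ⟨x, hx.2, hx.1⟩
        · rcases Finset.mem_insert.mp ht with rfl | ht'
          · exact key1 s hs'
          · have hsp := Finset.ne_of_mem_erase hs'
            have htp := Finset.ne_of_mem_erase ht'
            have hsq : s ≠ t → s ≠ p := fun _ => hsp
            have hsq' : s ≠ q := fun h => hqC (h ▸ Finset.mem_of_mem_erase hs')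
            have htq' : t ≠ q := fun h => hqC (h ▸ Finset.mem_of_mem_erase ht')
            have h := hcl s (Finset.mem_of_mem_erase hs') t (Finset.mem_of_mem_erase ht') hst
            rw [hr2o s hsp hsq', hr2o t htp htq'] at h
            exact h
      have hcard : (insert q (C.erase p)).card = C.card := by
        rw [Finset.card_insert_of_notMem (fun h => hqC (Finset.mem_of_mem_erase h)),
          Finset.card_erase_of_mem hpC]
        have : 1 ≤ C.card := Finset.card_pos.mpr ⟨p, hpC⟩
        omega
      calc C.card = (insert q (C.erase p)).card := hcard.symm
        _ ≤ _ := card_le_cliqueNum D r _ hsub hclq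
  · by_cases hqC : q ∈ C
    · -- q ∈ C, p ∉ C : replace q by p (with its old route)
      have key1 : ∀ u ∈ C.erase q, ((u : Demand n).arcs (r u) ∩ p.arcs (r p)).Nonempty := by
        intro u hu
        have huq : u ≠ q := Finset.ne_of_mem_erase hu
        have hup : u ≠ p := fun h => hpC (h ▸ Finset.mem_of_mem_erase hu)
        have h := hcl u (Finset.mem_of_mem_erase hu) q hqC huq
        rw [hr2o u hup huq, hr2q] at h
        obtain ⟨x, hx⟩ := h
        exact ⟨x, hx.1, h2 hx.2⟩
      have hsub : insert p (C.erase q) ⊆ D := by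
        intro x hx
        rcases Finset.mem_insert.mp hx with rfl | hx'
        · exact hp
        · exact hC (Finset.mem_of_mem_erase hx')
      have hclq : ∀ s ∈ insert p (C.erase q), ∀ t ∈ insert p (C.erase q), s ≠ t →
          ((s : Demand n).arcs (r s) ∩ t.arcs (r t)).Nonempty := by
        intro s hs t ht hst
        rcases Finset.mem_insert.mp hs with rfl | hs'
        · rcases Finset.mem_insert.mp ht with rfl | ht'
          · exact absurd rfl hst
          · obtain ⟨x, hx⟩ := key1 t ht'
            exact ⟨x, hx.2, hx.1⟩
        · rcases Finset.mem_insert.mp ht with rfl | ht'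
          · exact key1 s hs'
          · have hsq := Finset.ne_of_mem_erase hs'
            have htq := Finset.ne_of_mem_erase ht'
            have hsp' : s ≠ p := fun h => hpC (h ▸ Finset.mem_of_mem_erase hs')
            have htp' : t ≠ p := fun h => hpC (h ▸ Finset.mem_of_mem_erase ht')
            have h := hcl s (Finset.mem_of_mem_erase hs') t (Finset.mem_of_mem_erase ht') hst
            rw [hr2o s hsp' hsq, hr2o t htp' htq] at h
            exact h
      have hcard : (insert p (C.erase q)).card = C.card := by
        rw [Finset.card_insert_of_notMem (fun h => hpC (Finset.mem_of_mem_erase h)),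
          Finset.card_erase_of_mem hqC]
        have : 1 ≤ C.card := Finset.card_pos.mpr ⟨q, hqC⟩
        omega
      calc C.card = (insert p (C.erase q)).card := hcard.symm
        _ ≤ _ := card_le_cliqueNum D r _ hsub hclq
    · apply card_le_cliqueNum D r C hC
      intro s hs t ht hst
      have h := hcl s hs t ht hst
      rw [hr2o s (fun h' => hpC (h' ▸ hs)) (fun h' => hqC (h' ▸ hs)),
        hr2o t (fun h' => hpC (h' ▸ ht)) (fun h' => hqC (h' ▸ ht))] at h
      exact h

lemma sum_two (D : Finset (Demand n)) (f : Demand n → ℕ) (p q : Demand n)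
    (hp : p ∈ D) (hq : q ∈ D) (hpq : p ≠ q) :
    ∑ d ∈ D, f d = f p + f q + ∑ d ∈ (D.erase p).erase q, f d := by
  have hq' : q ∈ D.erase p := Finset.mem_erase.mpr ⟨fun h => hpq h.symm, hq⟩
  rw [← Finset.sum_erase_add D f hp, ← Finset.sum_erase_add (D.erase p) f hq']
  ring

/-- The measure strictly drops under an admissible exchange with shorter routes. -/
lemma meas_lt (D : Finset (Demand n)) (r : Demand n → Bool) (p q : Demand n)
    (hp : p ∈ D) (hq : q ∈ D) (hpq : p ≠ q) (b c : Bool)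
    (hdisj : ∀ x, x ∈ p.arcs b → x ∉ q.arcs c)
    (h1 : p.arcs b ⊆ q.arcs (r q)) (h2 : q.arcs c ⊆ p.arcs (r p))
    (hsum : rlen p b + rlen q c < rlen p (r p) + rlen q (r q)) :
    meas D (Function.update (Function.update r p b) q c) < meas D r := by
  classical
  set r2 := Function.update (Function.update r p b) q c with hr2
  have hr2p : r2 p = b := by
    rw [hr2, Function.update_of_ne hpq, Function.update_self]
  have hr2q : r2 q = c := by rw [hr2, Function.update_self]
  have hr2o : ∀ s, s ≠ p → s ≠ q → r2 s = r s := by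
    intro s hsp hsq; rw [hr2, Function.update_of_ne hsq, Function.update_of_ne hsp]
  have hkey := key D r p q hp hq hpq b c hdisj h1 h2
  have hAs : arcSum D r2 < arcSum D r := by
    unfold arcSum
    rw [sum_two D (fun d => rlen d (r2 d)) p q hp hq hpq,
      sum_two D (fun d => rlen d (r d)) p q hp hq hpq]
    have hcongr : ∑ d ∈ (D.erase p).erase q, rlen d (r2 d)
        = ∑ d ∈ (D.erase p).erase q, rlen d (r d) := by
      refine Finset.sum_congr rfl fun d hd => ?_
      have hdq : d ≠ q := Finset.ne_of_mem_erase hd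
      have hdp : d ≠ p := Finset.ne_of_mem_erase (Finset.mem_of_mem_erase hd)
      rw [hr2o d hdp hdq]
    rw [hcongr, hr2p, hr2q]
    omega
  unfold meas
  have hmul : cliqueNum D r2 (fun _ => 1) * (D.card * n + 1)
      ≤ cliqueNum D r (fun _ => 1) * (D.card * n + 1) :=
    Nat.mul_le_mul_right _ hkey
  omega

end Aux
section Main

variable {n : ℕ}

lemma no_tt (p q : Demand n)
    (hcov : p.arcs true ∪ q.arcs true = Set.Icc 1 n) : False := by
  have hc := Set.ext_iff.mp hcov n
  simp only [Demand.arcs, if_true, Demand.arcPlus, Set.mem_union, Set.mem_setOf_eq,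
    Set.mem_Icc] at hc
  have := p.h1i; have := p.hij; have := p.hjn; have := q.hjn
  omega

lemma no_tf (D : Finset (Demand n)) (r : Demand n → Bool)
    (hmin : ∀ r', meas D r ≤ meas D r')
    (p q : Demand n) (hp : p ∈ D) (hq : q ∈ D)
    (hbp : r p = true) (hbq : r q = false)
    (hint : (p.arcs (r p) ∩ q.arcs (r q)).Nonempty)
    (hcov : p.arcs (r p) ∪ q.arcs (r q) = Set.Icc 1 n) : False := by
  classical
  have hpq : p ≠ q := fun h => by rw [h, hbq] at hbp; exact Bool.noConfusion hbp
  rw [hbp, hbq] at hint hcov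
  have hc := Set.ext_iff.mp hcov
  have hq1 := hc q.i
  have hq2 := hc (q.j - 1)
  simp only [Demand.arcs, if_true, Bool.false_eq_true, if_false, Demand.arcPlus,
    Demand.arcMinus, Set.mem_union, Set.mem_setOf_eq, Set.mem_Icc] at hq1 hq2
  have hp1 := p.h1i; have hp2 := p.hij; have hp3 := p.hjn
  have hq1' := q.h1i; have hq2' := q.hij; have hq3' := q.hjn
  have hii : p.i ≤ q.i := by omega
  have hjj : q.j ≤ p.j := by omega
  obtain ⟨k, hk⟩ := hint
  simp only [Demand.arcs, if_true, Bool.false_eq_true, if_false, Demand.arcPlus,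
    Demand.arcMinus, Set.mem_inter_iff, Set.mem_setOf_eq] at hk
  have hlen : q.j - q.i < p.j - p.i := by omega
  have hdisj : ∀ x, x ∈ p.arcs false → x ∉ q.arcs true := by
    intro x hx hx'
    simp only [Demand.arcs, if_true, Bool.false_eq_true, if_false, Demand.arcPlus,
      Demand.arcMinus, Set.mem_setOf_eq] at hx hx'
    omega
  have h1 : p.arcs false ⊆ q.arcs (r q) := by
    rw [hbq]
    intro x hx
    simp only [Demand.arcs, Bool.false_eq_true, if_false, Demand.arcMinus,
      Set.mem_setOf_eq] at hx ⊢
    omega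
  have h2 : q.arcs true ⊆ p.arcs (r p) := by
    rw [hbp]
    intro x hx
    simp only [Demand.arcs, if_true, Demand.arcPlus, Set.mem_setOf_eq] at hx ⊢
    omega
  have hsum : rlen p false + rlen q true < rlen p (r p) + rlen q (r q) := by
    rw [hbp, hbq]
    simp only [rlen, if_true, Bool.false_eq_true, if_false]
    omega
  exact absurd (hmin _) (Nat.not_le.mpr (meas_lt D r p q hp hq hpq false true hdisj h1 h2 hsum))

lemma no_ff (D : Finset (Demand n)) (r : Demand n → Bool)
    (hmin : ∀ r', meas D r ≤ meas D r')
    (p q : Demand n) (hp : p ∈ D) (hq : q ∈ D)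
    (hbp : r p = false) (hbq : r q = false)
    (hcov : p.arcs (r p) ∪ q.arcs (r q) = Set.Icc 1 n) : False := by
  classical
  rw [hbp, hbq] at hcov
  have hc := Set.ext_iff.mp hcov
  have hp1 := p.h1i; have hp2 := p.hij; have hp3 := p.hjn
  have hq1' := q.h1i; have hq2' := q.hij; have hq3' := q.hjn
  have hdisj' : ∀ k, ¬(p.i ≤ k ∧ k < p.j ∧ q.i ≤ k ∧ k < q.j) := by
    intro k hk
    have h := hc k
    simp only [Demand.arcs, Bool.false_eq_true, if_false, Demand.arcMinus, Set.mem_union,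
      Set.mem_setOf_eq, Set.mem_Icc] at h
    omega
  have hpq : p ≠ q := by
    intro h
    exact hdisj' p.i (by subst h; omega)
  have hsep : p.j ≤ q.i ∨ q.j ≤ p.i := by
    by_contra h
    push_neg at h
    rcases le_total p.i q.i with h' | h'
    · exact hdisj' q.i (by omega)
    · exact hdisj' p.i (by omega)
  have hdisj : ∀ x, x ∈ p.arcs true → x ∉ q.arcs true := by
    intro x hx hx'
    simp only [Demand.arcs, if_true, Demand.arcPlus, Set.mem_setOf_eq] at hx hx'
    exact hdisj' x (by omega)
  have h1 : p.arcs true ⊆ q.arcs (r q) := by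
    rw [hbq]
    intro x hx
    simp only [Demand.arcs, if_true, Bool.false_eq_true, if_false, Demand.arcPlus,
      Demand.arcMinus, Set.mem_setOf_eq] at hx ⊢
    omega
  have h2 : q.arcs true ⊆ p.arcs (r p) := by
    rw [hbp]
    intro x hx
    simp only [Demand.arcs, if_true, Bool.false_eq_true, if_false, Demand.arcPlus,
      Demand.arcMinus, Set.mem_setOf_eq] at hx ⊢
    omega
  have hsum : rlen p true + rlen q true < rlen p (r p) + rlen q (r q) := by
    rw [hbp, hbq]
    simp only [rlen, if_true, Bool.false_eq_true, if_false]
    omega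
  exact absurd (hmin _) (Nat.not_le.mpr (meas_lt D r p q hp hq hpq true true hdisj h1 h2 hsum))

end Main

/-- For uniform weights, the MCRPC has an optimal routing without collisions. -/
theorem exists_optimal_collision_free {n : ℕ} (D : Finset (Demand n)) :
    ∃ r : Demand n → Bool,
      (∀ r' : Demand n → Bool,
        cliqueNum D r (fun _ => 1) ≤ cliqueNum D r' (fun _ => 1)) ∧
      ∀ p ∈ D, ∀ q ∈ D, ¬ Collide r p q := by
  classical
  have hNex : (Set.range (meas D)).Nonempty := ⟨meas D (fun _ => true), ⟨_, rfl⟩⟩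
  obtain ⟨r, hNr⟩ := Nat.sInf_mem hNex
  have hmin : ∀ r', meas D r ≤ meas D r' := by
    intro r'
    rw [hNr]
    exact Nat.sInf_le ⟨r', rfl⟩
  refine ⟨r, ?_, ?_⟩
  · intro r'
    by_contra hlt
    push_neg at hlt
    have h1 := hmin r'
    unfold meas at h1
    set K := D.card * n + 1 with hK
    have hK' : arcSum D r' < K := arcSum_lt D r'
    have hmul : (cliqueNum D r' (fun _ => 1) + 1) * K ≤ cliqueNum D r (fun _ => 1) * K :=
      Nat.mul_le_mul_right _ (by omega)
    rw [add_mul, one_mul] at hmul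
    omega
  · intro p hp q hq hcol
    obtain ⟨-, hint, hcov⟩ := hcol
    cases hbp : r p
    · cases hbq : r q
      · exact no_ff D r hmin p q hp hq hbp hbq hcov
      · refine no_tf D r hmin q p hq hp hbq hbp ?_ ?_
        · rwa [Set.inter_comm] at hint
        · rwa [Set.union_comm] at hcov
    · cases hbq : r q
      · exact no_tf D r hmin p q hp hq hbp hbq hint hcov
      · rw [hbp, hbq] at hcov
        exact no_tt p q hcov
end

section
/- Every collision-free routing R of a demand set D (with all demands having distinct end-pairs) has a critical demand: a demand p such that every demand q parallel to p with e(q)≠e(p) is routed inside a route of p, i.e., R_q ⊆ p⁺ when e(q)⊆V(p⁺) and R_q ⊆ p⁻ when e(q)⊆V(p⁻). In particular, any demand p whose chosen route R_p has the maximum number of arcs among all chosen routes in a collision-free routing is critical for R. -/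
open Finset

open Demand

/-- The demand `p` is critical for the routing `r` of `D`: every demand `q ∈ D` parallel
to `p` with `e(q) ≠ e(p)` is routed inside the corresponding route of `p`. -/
def Critical {n : ℕ} (D : Finset (Demand n)) (r : Demand n → Bool) (p : Demand n) : Prop :=
  ∀ q ∈ D, ¬ Cross p q → q.ends ≠ p.ends →
    (q.ends ⊆ p.VPlus → q.arcs (r q) ⊆ p.arcPlus) ∧
    (q.ends ⊆ p.VMinus → q.arcs (r q) ⊆ p.arcMinus)

lemma ncard_arcs_true {n : ℕ} (p : Demand n) : (p.arcs true).ncard = p.j - p.i := by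
  have h : p.arcs true = ↑(Finset.Ico p.i p.j) := by
    ext k; simp [Demand.arcs, Demand.arcPlus]
  rw [h, Set.ncard_coe_finset, Nat.card_Ico]

lemma ncard_arcs_false {n : ℕ} (p : Demand n) : (p.arcs false).ncard = n + p.i - p.j := by
  have h : p.arcs false = ↑(Finset.Ico 1 p.i ∪ Finset.Icc p.j n) := by
    ext k; simp [Demand.arcs, Demand.arcMinus]
  have hd : Disjoint (Finset.Ico 1 p.i) (Finset.Icc p.j n) := by
    rw [Finset.disjoint_left]
    intro k hk hk'
    simp only [Finset.mem_Ico, Finset.mem_Icc] at hk hk'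
    have := p.hij; omega
  rw [h, Set.ncard_coe_finset, Finset.card_union_of_disjoint hd, Nat.card_Ico, Nat.card_Icc]
  have := p.h1i; have := p.hij; have := p.hjn; omega

lemma max_is_critical {n : ℕ} (D : Finset (Demand n)) (r : Demand n → Bool)
    (hfree : ∀ p ∈ D, ∀ q ∈ D, ¬ Collide r p q)
    (p : Demand n) (hp : p ∈ D)
    (hmax : ∀ q ∈ D, (q.arcs (r q)).ncard ≤ (p.arcs (r p)).ncard) :
    Critical D r p := by
  intro q hq hcross hne
  have hp1 := p.h1i; have hp2 := p.hij; have hp3 := p.hjn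
  have hq1 := q.h1i; have hq2 := q.hij; have hq3 := q.hjn
  have hne' : ¬(q.i = p.i ∧ q.j = p.j) := by
    rintro ⟨e1, e2⟩; exact hne (by simp [Demand.ends, e1, e2])
  have key := hmax q hq
  constructor
  · intro hsub
    have h1 : p.i ≤ q.i ∧ q.i ≤ p.j := by
      simpa [Demand.VPlus] using hsub (show q.i ∈ q.ends by simp [Demand.ends])
    have h2 : p.i ≤ q.j ∧ q.j ≤ p.j := by
      simpa [Demand.VPlus] using hsub (show q.j ∈ q.ends by simp [Demand.ends])
    cases hrq : r q with
    | true =>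
      simp [Demand.arcs, if_true]
      intro k hk
      simp [Demand.arcPlus, Set.mem_setOf_eq] at hk ⊢
      omega
    | false =>
      exfalso
      cases hrp : r p with
      | false =>
        rw [hrq, hrp, ncard_arcs_false, ncard_arcs_false] at key
        omega
      | true =>
        apply hfree p hp q hq
        refine ⟨hcross, ?_, ?_⟩
        · refine ⟨if p.i < q.i then p.i else q.j, ?_⟩
          simp [hrq, hrp, Demand.arcs, if_true, if_false, Set.mem_inter_iff,
            Demand.arcPlus, Demand.arcMinus, Set.mem_setOf_eq]
          split <;> omega
        · ext k
          simp [hrq, hrp, Demand.arcs, if_true, if_false, Set.mem_union,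
            Demand.arcPlus, Demand.arcMinus, Set.mem_setOf_eq, Set.mem_Icc]
          omega
  · intro hsub
    have h1 : (1 ≤ q.i ∧ q.i ≤ p.i) ∨ (p.j ≤ q.i ∧ q.i ≤ n) := by
      simpa [Demand.VMinus] using hsub (show q.i ∈ q.ends by simp [Demand.ends])
    have h2 : (1 ≤ q.j ∧ q.j ≤ p.i) ∨ (p.j ≤ q.j ∧ q.j ≤ n) := by
      simpa [Demand.VMinus] using hsub (show q.j ∈ q.ends by simp [Demand.ends])
    cases hrq : r q with
    | false =>
      by_cases hC : q.i ≤ p.i ∧ p.j ≤ q.j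
      · simp [Demand.arcs, if_false]
        intro k hk
        simp [Demand.arcMinus, Set.mem_setOf_eq] at hk ⊢
        omega
      · exfalso
        have hAB : q.j ≤ p.i ∨ p.j ≤ q.i := by omega
        cases hrp : r p with
        | true =>
          rw [hrq, hrp, ncard_arcs_false, ncard_arcs_true] at key
          omega
        | false =>
          apply hfree p hp q hq
          refine ⟨hcross, ?_, ?_⟩
          · refine ⟨max p.j q.j, ?_⟩
            simp [hrq, hrp, Demand.arcs, if_false, Set.mem_inter_iff,
              Demand.arcMinus, Set.mem_setOf_eq]
            omega
          · ext k
            simp [hrq, hrp, Demand.arcs, if_false, Set.mem_union,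
              Demand.arcMinus, Set.mem_setOf_eq, Set.mem_Icc]
            omega
    | true =>
      by_cases hAB : q.j ≤ p.i ∨ p.j ≤ q.i
      · simp [Demand.arcs, if_true]
        intro k hk
        simp [Demand.arcPlus, Set.mem_setOf_eq] at hk
        simp [Demand.arcMinus, Set.mem_setOf_eq]
        omega
      · exfalso
        have hC : q.i ≤ p.i ∧ p.j ≤ q.j := by omega
        cases hrp : r p with
        | true =>
          rw [hrq, hrp, ncard_arcs_true, ncard_arcs_true] at key
          omega
        | false =>
          apply hfree p hp q hq
          refine ⟨hcross, ?_, ?_⟩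
          · refine ⟨if q.i < p.i then q.i else p.j, ?_⟩
            simp [hrq, hrp, Demand.arcs, if_true, if_false, Set.mem_inter_iff,
              Demand.arcPlus, Demand.arcMinus, Set.mem_setOf_eq]
            split <;> omega
          · ext k
            simp [hrq, hrp, Demand.arcs, if_true, if_false, Set.mem_union,
              Demand.arcPlus, Demand.arcMinus, Set.mem_setOf_eq, Set.mem_Icc]
            omega

/-- Every collision-free routing of a demand set with pairwise distinct
end-pairs has a critical demand; in particular, any demand whose chosen route has the
maximum number of arcs is critical. -/
theorem collision_free_has_critical {n : ℕ} (D : Finset (Demand n)) (hD : D.Nonempty)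
    (hdist : ∀ p ∈ D, ∀ q ∈ D, p.ends = q.ends → p = q)
    (r : Demand n → Bool) (hfree : ∀ p ∈ D, ∀ q ∈ D, ¬ Collide r p q) :
    (∃ p ∈ D, Critical D r p) ∧
    ∀ p ∈ D, (∀ q ∈ D, (q.arcs (r q)).ncard ≤ (p.arcs (r p)).ncard) →
      Critical D r p := by
  constructor
  · obtain ⟨p, hp, hmax⟩ := D.exists_max_image (fun q => (q.arcs (r q)).ncard) hD
    exact ⟨p, hp, max_is_critical D r hfree p hp hmax⟩
  · intro p hp hmax
    exact max_is_critical D r hfree p hp hmax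
end

section
/- Let Q be a maximum clique of the intersection graph of the routing S that routes every demand along its shorter route, let a be an arc contained in the largest number of routes of Q, and let b be an arc 'antipodal' to a (i.e., chosen so that the two paths P_a and P_b between a and b have lengths differing by at most one). Then every demand whose route belongs to Q has one end in P_a and one end in P_b. -/
open Finset

open Demand

/-- The node following arc `a` on the cycle (arc `a` joins `a` to `csucc n a`). -/
def csucc (n a : ℕ) : ℕ := if a = n then 1 else a + 1

/-- The cyclic interval of nodes from `x` to `y` (going in the direction of the cycle). -/
def cycI (n x y : ℕ) : Set ℕ := if x ≤ y then Set.Icc x y else Set.Icc x n ∪ Set.Icc 1 y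

/-- The routing sending each demand along its shorter route (ties broken towards `p⁺`). -/
def sRoute (n : ℕ) : Demand n → Bool := fun p => decide (2 * (p.j - p.i) ≤ n)

lemma mem_arcs_sRoute {n : ℕ} (q : Demand n) (x : ℕ) :
    x ∈ q.arcs (sRoute n q) ↔
      (2 * (q.j - q.i) ≤ n ∧ q.i ≤ x ∧ x < q.j) ∨
      (¬ (2 * (q.j - q.i) ≤ n) ∧ ((1 ≤ x ∧ x < q.i) ∨ (q.j ≤ x ∧ x ≤ n))) := by
  by_cases h : 2 * (q.j - q.i) ≤ n <;>
    simp [Demand.arcs, sRoute, h, Demand.arcPlus, Demand.arcMinus, Set.mem_setOf_eq]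

lemma mem_cycI {n x y v : ℕ} :
    v ∈ cycI n x y ↔
      (x ≤ y ∧ x ≤ v ∧ v ≤ y) ∨ (¬ x ≤ y ∧ ((x ≤ v ∧ v ≤ n) ∨ (1 ≤ v ∧ v ≤ y))) := by
  simp only [cycI]
  split_ifs with h <;> simp [Set.mem_Icc, h]

lemma ncard_cycI {n x y : ℕ} (hy : y < x) :
    (cycI n x y).ncard = (n + 1 - x) + y := by
  simp only [cycI, if_neg (by omega : ¬ x ≤ y)]
  rw [Set.ncard_union_eq (by
        rw [Set.disjoint_left]
        intro z hz1 hz2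
        simp only [Set.mem_Icc] at hz1 hz2
        omega)
      (Set.finite_Icc _ _) (Set.finite_Icc _ _)]
  rw [← Finset.coe_Icc, ← Finset.coe_Icc, Set.ncard_coe_finset, Set.ncard_coe_finset,
    Nat.card_Icc, Nat.card_Icc]
  omega

lemma ncard_cycI' {n x y : ℕ} (hxy : x ≤ y) :
    (cycI n x y).ncard = y + 1 - x := by
  simp only [cycI, if_pos hxy]
  rw [← Finset.coe_Icc, Set.ncard_coe_finset, Nat.card_Icc]

lemma csucc_spec {n a : ℕ} (h1 : 1 ≤ a) (h2 : a ≤ n) :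
    (a = n ∧ csucc n a = 1) ∨ (a < n ∧ csucc n a = a + 1) := by
  unfold csucc
  split_ifs with h
  · exact Or.inl ⟨h, rfl⟩
  · exact Or.inr ⟨by omega, rfl⟩

open scoped Classical in
lemma key_aux {n : ℕ} (Q : Finset (Demand n)) (a s : ℕ)
    (hclique : ∀ p ∈ Q, ∀ q ∈ Q, p ≠ q →
      ((p : Demand n).arcs (sRoute n p) ∩ q.arcs (sRoute n q)).Nonempty)
    (p : Demand n) (hp : p ∈ Q)
    (hsp : s ∈ p.arcs (sRoute n p)) (hap : a ∉ p.arcs (sRoute n p))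
    (harith : ∀ q : Demand n, a ∈ q.arcs (sRoute n q) →
        (∃ k, k ∈ q.arcs (sRoute n q) ∧ k ∈ p.arcs (sRoute n p)) →
        s ∈ q.arcs (sRoute n q))
    (hcard : (Q.filter fun q => s ∈ q.arcs (sRoute n q)).card ≤
             (Q.filter fun q => a ∈ q.arcs (sRoute n q)).card) : False := by
  have hfwd : ∀ q ∈ Q, a ∈ q.arcs (sRoute n q) → s ∈ q.arcs (sRoute n q) := by
    intro q hq haq
    by_cases hqp : q = p
    · exact absurd (hqp ▸ haq) hap
    · obtain ⟨k, hk⟩ := hclique q hq p hp hqp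
      exact harith q haq ⟨k, hk.1, hk.2⟩
  have hsub : Q.filter (fun q => a ∈ q.arcs (sRoute n q)) ⊆
      Q.filter (fun q => s ∈ q.arcs (sRoute n q)) := by
    intro q hq
    rw [Finset.mem_filter] at *
    exact ⟨hq.1, hfwd q hq.1 hq.2⟩
  have hss : Q.filter (fun q => a ∈ q.arcs (sRoute n q)) ⊂
      Q.filter (fun q => s ∈ q.arcs (sRoute n q)) := by
    refine ⟨hsub, fun hsub' => ?_⟩
    exact hap (Finset.mem_filter.mp (hsub' (Finset.mem_filter.mpr ⟨hp, hsp⟩))).2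
  exact absurd hcard (not_le.mpr (Finset.card_lt_card hss))

open scoped Classical in
/-- Let `Q` be a maximum clique of the intersection graph of the
shortest-route routing `S`, let `a` be an arc contained in the largest number of routes of
`Q`, and let `b` be an arc antipodal to `a` (the two paths `P_a`, `P_b` of the cycle
between the arcs `a` and `b` have lengths differing by at most one). Then every demand of
`Q` has one end in `P_a` and one end in `P_b`. -/
theorem max_clique_split {n : ℕ} (D : Finset (Demand n)) (w : Demand n → ℕ)
    (hw : ∀ p ∈ D, 0 < w p) (Q : Finset (Demand n)) (hQD : Q ⊆ D)
    (hclique : ∀ p ∈ Q, ∀ q ∈ Q, p ≠ q →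
      (p.arcs (sRoute n p) ∩ q.arcs (sRoute n q)).Nonempty)
    (hmax : ∑ p ∈ Q, w p = cliqueNum D (sRoute n) w)
    (a b : ℕ) (ha : a ∈ Finset.Icc 1 n) (hb : b ∈ Finset.Icc 1 n) (hab : a ≠ b)
    (hamax : ∀ c ∈ Finset.Icc 1 n,
      (Q.filter fun p => c ∈ p.arcs (sRoute n p)).card ≤
      (Q.filter fun p => a ∈ p.arcs (sRoute n p)).card)
    (hbal : (cycI n (csucc n a) b).ncard ≤ (cycI n (csucc n b) a).ncard + 1 ∧
            (cycI n (csucc n b) a).ncard ≤ (cycI n (csucc n a) b).ncard + 1) :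
    ∀ p ∈ Q,
      (p.i ∈ cycI n (csucc n a) b ∧ p.j ∈ cycI n (csucc n b) a) ∨
      (p.i ∈ cycI n (csucc n b) a ∧ p.j ∈ cycI n (csucc n a) b) := by
  intro p hp
  by_contra hcon
  simp only [mem_cycI] at hcon
  rw [Finset.mem_Icc] at ha hb
  obtain ⟨ha1, ha2⟩ := ha
  obtain ⟨hb1, hb2⟩ := hb
  have hpi := p.h1i
  have hpij := p.hij
  have hpjn := p.hjn
  have hA := csucc_spec ha1 ha2
  have hB := csucc_spec hb1 hb2
  -- compute the two path sizes
  rcases lt_or_gt_of_ne hab with hlt | hlt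
  · -- a < b
    have hna : (cycI n (csucc n a) b).ncard = b - a := by
      have hcs : csucc n a = a + 1 := by rcases hA with ⟨h, _⟩ | ⟨_, h⟩ <;> omega
      rw [hcs, ncard_cycI' (by omega)]; omega
    have hnb : (cycI n (csucc n b) a).ncard = n - (b - a) := by
      rcases hB with ⟨h1, h2⟩ | ⟨h1, h2⟩
      · rw [h2, ncard_cycI' (by omega)]; omega
      · rw [h2, ncard_cycI (by omega)]; omega
    have hd1 : n - 1 ≤ 2 * (b - a) := by omega
    have hd2 : 2 * (b - a) ≤ n + 1 := by omega
    have hcase : (a < p.i ∧ p.j ≤ b) ∨ (p.j ≤ a) ∨ (b < p.i) ∨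
        (p.i ≤ a ∧ b < p.j) := by omega
    rcases hcase with hc | hc | hc | hc
    · -- both ends strictly inside P_a : take s = p.i
      exact key_aux Q a p.i hclique p hp
        (by rw [mem_arcs_sRoute]; omega)
        (by rw [mem_arcs_sRoute]; omega)
        (by
          rintro q haq ⟨k, hk1, hk2⟩
          have hq1 := q.h1i; have hq2 := q.hij; have hq3 := q.hjn
          rw [mem_arcs_sRoute] at haq hk1 hk2 ⊢
          omega)
        (hamax p.i (Finset.mem_Icc.mpr ⟨by omega, by omega⟩))
    · -- both ends ≤ a : take s = p.j - 1
      exact key_aux Q a (p.j - 1) hclique p hp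
        (by rw [mem_arcs_sRoute]; omega)
        (by rw [mem_arcs_sRoute]; omega)
        (by
          rintro q haq ⟨k, hk1, hk2⟩
          have hq1 := q.h1i; have hq2 := q.hij; have hq3 := q.hjn
          rw [mem_arcs_sRoute] at haq hk1 hk2 ⊢
          omega)
        (hamax (p.j - 1) (Finset.mem_Icc.mpr ⟨by omega, by omega⟩))
    · -- both ends > b : take s = p.j - 1
      exact key_aux Q a (p.j - 1) hclique p hp
        (by rw [mem_arcs_sRoute]; omega)
        (by rw [mem_arcs_sRoute]; omega)
        (by
          rintro q haq ⟨k, hk1, hk2⟩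
          have hq1 := q.h1i; have hq2 := q.hij; have hq3 := q.hjn
          rw [mem_arcs_sRoute] at haq hk1 hk2 ⊢
          omega)
        (hamax (p.j - 1) (Finset.mem_Icc.mpr ⟨by omega, by omega⟩))
    · -- p.i ≤ a < b < p.j
      by_cases hone : p.i = 1
      · exact key_aux Q a n hclique p hp
          (by rw [mem_arcs_sRoute]; omega)
          (by rw [mem_arcs_sRoute]; omega)
          (by
            rintro q haq ⟨k, hk1, hk2⟩
            have hq1 := q.h1i; have hq2 := q.hij; have hq3 := q.hjn
            rw [mem_arcs_sRoute] at haq hk1 hk2 ⊢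
            omega)
          (hamax n (Finset.mem_Icc.mpr ⟨by omega, le_rfl⟩))
      · exact key_aux Q a (p.i - 1) hclique p hp
          (by rw [mem_arcs_sRoute]; omega)
          (by rw [mem_arcs_sRoute]; omega)
          (by
            rintro q haq ⟨k, hk1, hk2⟩
            have hq1 := q.h1i; have hq2 := q.hij; have hq3 := q.hjn
            rw [mem_arcs_sRoute] at haq hk1 hk2 ⊢
            omega)
          (hamax (p.i - 1) (Finset.mem_Icc.mpr ⟨by omega, by omega⟩))
  · -- b < a
    have hnb : (cycI n (csucc n b) a).ncard = a - b := by
      have hcs : csucc n b = b + 1 := by rcases hB with ⟨h, _⟩ | ⟨_, h⟩ <;> omega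
      rw [hcs, ncard_cycI' (by omega)]; omega
    have hna : (cycI n (csucc n a) b).ncard = n - (a - b) := by
      rcases hA with ⟨h1, h2⟩ | ⟨h1, h2⟩
      · rw [h2, ncard_cycI' (by omega)]; omega
      · rw [h2, ncard_cycI (by omega)]; omega
    have hd1 : n - 1 ≤ 2 * (a - b) := by omega
    have hd2 : 2 * (a - b) ≤ n + 1 := by omega
    have hcase : (b < p.i ∧ p.j ≤ a) ∨ (p.j ≤ b) ∨ (a < p.i) ∨
        (p.i ≤ b ∧ a < p.j) := by omega
    rcases hcase with hc | hc | hc | hc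
    · -- both ends inside P_b : take s = p.j - 1
      exact key_aux Q a (p.j - 1) hclique p hp
        (by rw [mem_arcs_sRoute]; omega)
        (by rw [mem_arcs_sRoute]; omega)
        (by
          rintro q haq ⟨k, hk1, hk2⟩
          have hq1 := q.h1i; have hq2 := q.hij; have hq3 := q.hjn
          rw [mem_arcs_sRoute] at haq hk1 hk2 ⊢
          omega)
        (hamax (p.j - 1) (Finset.mem_Icc.mpr ⟨by omega, by omega⟩))
    · -- both ends ≤ b : take s = p.i
      exact key_aux Q a p.i hclique p hp
        (by rw [mem_arcs_sRoute]; omega)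
        (by rw [mem_arcs_sRoute]; omega)
        (by
          rintro q haq ⟨k, hk1, hk2⟩
          have hq1 := q.h1i; have hq2 := q.hij; have hq3 := q.hjn
          rw [mem_arcs_sRoute] at haq hk1 hk2 ⊢
          omega)
        (hamax p.i (Finset.mem_Icc.mpr ⟨by omega, by omega⟩))
    · -- both ends > a : take s = p.i
      exact key_aux Q a p.i hclique p hp
        (by rw [mem_arcs_sRoute]; omega)
        (by rw [mem_arcs_sRoute]; omega)
        (by
          rintro q haq ⟨k, hk1, hk2⟩
          have hq1 := q.h1i; have hq2 := q.hij; have hq3 := q.hjn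
          rw [mem_arcs_sRoute] at haq hk1 hk2 ⊢
          omega)
        (hamax p.i (Finset.mem_Icc.mpr ⟨by omega, by omega⟩))
    · -- p.i ≤ b < a < p.j : take s = p.j
      exact key_aux Q a p.j hclique p hp
        (by rw [mem_arcs_sRoute]; omega)
        (by rw [mem_arcs_sRoute]; omega)
        (by
          rintro q haq ⟨k, hk1, hk2⟩
          have hq1 := q.h1i; have hq2 := q.hij; have hq3 := q.hjn
          rw [mem_arcs_sRoute] at haq hk1 hk2 ⊢
          omega)
        (hamax p.j (Finset.mem_Icc.mpr ⟨by omega, by omega⟩))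
end

section
/- Routing each demand along its shorter route and taking a maximum-weight clique of the resulting intersection graph yields a 2-approximation: if S is the shortest-route routing and Q a maximum-weight clique of H_S, then for every routing R of D, w(Q) ≤ 2·ω(H_R, w), where ω(H_R,w) is the maximum weight of a clique in H_R. -/
open Finset

open Demand

/-- Membership in a route, expressed arithmetically (for arcs `1 ≤ k ≤ n`). -/
private lemma mem_arcs_iff {n : ℕ} (p : Demand n) (bb : Bool) (k : ℕ) (h1 : 1 ≤ k)
    (h2 : k ≤ n) :
    k ∈ p.arcs bb ↔ (if bb then (p.i ≤ k ∧ k < p.j) else ¬(p.i ≤ k ∧ k < p.j)) := by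
  have := p.h1i; have := p.hij; have := p.hjn
  cases bb <;>
    simp only [Demand.arcs, Demand.arcPlus, Demand.arcMinus, if_true, if_false,
      Bool.false_eq_true, Bool.true_eq_false, Set.mem_setOf_eq, ite_true, ite_false] <;>
  omega

/-- Any subset of `D` that is a clique in `H_r` has weight at most `cliqueNum D r w`. -/
private lemma sum_le_cliqueNum {n : ℕ} (D : Finset (Demand n)) (r : Demand n → Bool)
    (w : Demand n → ℕ) (C : Finset (Demand n)) (hCD : C ⊆ D)
    (hC : ∀ p ∈ C, ∀ q ∈ C, p ≠ q →
      (Demand.arcs p (r p) ∩ Demand.arcs q (r q)).Nonempty) :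
    ∑ p ∈ C, w p ≤ cliqueNum D r w := by
  classical
  unfold cliqueNum
  apply Finset.le_sup (f := fun C : Finset (Demand n) => ∑ p ∈ C, w p)
  simp only [Finset.mem_filter, Finset.mem_powerset]
  exact ⟨hCD, hC⟩

/-- The key combinatorial lemma: if `Q` is a clique of the shortest-route intersection graph,
then there are two arcs `a`, `b` such that every demand of `Q` has exactly one of `a`, `b`
on its plus side (equivalently, every route of every demand of `Q` in any routing contains
exactly one of `a`, `b`). -/
private lemma exists_split {n : ℕ} (Q : Finset (Demand n)) (hQ : Q.Nonempty)
    (hclique : ∀ p ∈ Q, ∀ q ∈ Q, p ≠ q →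
      (Demand.arcs p (sRoute n p) ∩ Demand.arcs q (sRoute n q)).Nonempty) :
    ∃ a b : ℕ, 1 ≤ a ∧ a ≤ n ∧ 1 ≤ b ∧ b ≤ n ∧
      ∀ p ∈ Q, ((p.i ≤ a ∧ a < p.j) ↔ ¬(p.i ≤ b ∧ b < p.j)) := by
  classical
  obtain ⟨p0, hp0⟩ := hQ
  have hn2 : 2 ≤ n := by have := p0.h1i; have := p0.hij; have := p0.hjn; omega
  -- extraction of intersection witnesses
  have plusplus : ∀ p ∈ Q, ∀ q ∈ Q, p ≠ q → sRoute n p = true → sRoute n q = true →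
      ∃ k, (p.i ≤ k ∧ k < p.j) ∧ (q.i ≤ k ∧ k < q.j) := by
    intro p hp q hq hne hsp hsq
    obtain ⟨k, hk⟩ := hclique p hp q hq hne
    have hk1 := hk.1; have hk2 := hk.2
    rw [hsp] at hk1; rw [hsq] at hk2
    exact ⟨k, hk1, hk2⟩
  have plusminus : ∀ p ∈ Q, ∀ q ∈ Q, p ≠ q → sRoute n p = true → sRoute n q = false →
      ∃ k, (p.i ≤ k ∧ k < p.j) ∧ ((1 ≤ k ∧ k < q.i) ∨ (q.j ≤ k ∧ k ≤ n)) := by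
    intro p hp q hq hne hsp hsq
    obtain ⟨k, hk⟩ := hclique p hp q hq hne
    have hk1 := hk.1; have hk2 := hk.2
    rw [hsp] at hk1; rw [hsq] at hk2
    exact ⟨k, hk1, hk2⟩
  set QP : Finset (Demand n) := Q.filter (fun p => sRoute n p = true) with hQPdef
  by_cases hQP : QP.Nonempty
  · -- there is a plus-routed demand
    obtain ⟨q0, hq0QP, hq0max⟩ := Finset.exists_max_image QP (fun p => p.i) hQP
    have hq0Q : q0 ∈ Q := (Finset.mem_filter.1 hq0QP).1
    have hq0s : sRoute n q0 = true := (Finset.mem_filter.1 hq0QP).2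
    have hq0len : 2 * (q0.j - q0.i) ≤ n := by
      simpa [sRoute] using hq0s
    have hq01 := q0.h1i; have hq02 := q0.hij; have hq03 := q0.hjn
    have hx : ∀ p ∈ Q, sRoute n p = true → p.i ≤ q0.i := by
      intro p hp hs
      exact hq0max p (Finset.mem_filter.2 ⟨hp, hs⟩)
    have hxlt : ∀ p ∈ Q, sRoute n p = true → q0.i < p.j := by
      intro p hp hs
      by_cases hpq : p = q0
      · subst hpq; exact p.hij
      · obtain ⟨k, hka, hkb⟩ := plusplus p hp q0 hq0Q hpq hs hq0s
        omega
    set B : Finset (Demand n) :=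
      Q.filter (fun p => sRoute n p = false ∧ p.i ≤ q0.i ∧ q0.i < p.j) with hBdef
    by_cases hB : B.Nonempty
    · -- hard case: some minus-routed demand misses the arc q0.i
      obtain ⟨m, hmB, hmmax⟩ := Finset.exists_max_image B (fun p => p.j) hB
      have hmQ : m ∈ Q := (Finset.mem_filter.1 hmB).1
      obtain ⟨hms, hmi, hmj⟩ : sRoute n m = false ∧ m.i ≤ q0.i ∧ q0.i < m.j :=
        (Finset.mem_filter.1 hmB).2
      have hmlen : ¬ (2 * (m.j - m.i) ≤ n) := by
        simpa [sRoute] using hms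
      have hm1 := m.h1i; have hm2 := m.hij; have hm3 := m.hjn
      have hq0m_ne : q0 ≠ m := by
        intro h; rw [h] at hq0s; rw [hq0s] at hms; exact Bool.noConfusion hms
      obtain ⟨k2, hk2a, hk2b⟩ := plusminus q0 hq0Q m hmQ hq0m_ne hq0s hms
      refine ⟨m.j, m.j + n / 2 - n, by omega, by omega, by omega, by omega, ?_⟩
      intro p hp
      have h1 := p.h1i; have h2 := p.hij; have h3 := p.hjn
      cases hsp : sRoute n p with
      | true =>
        have hlen : 2 * (p.j - p.i) ≤ n := by simpa [sRoute] using hsp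
        have hle := hx p hp hsp
        have hlt := hxlt p hp hsp
        have hpm_ne : p ≠ m := by
          intro h; rw [h] at hsp; rw [hsp] at hms; exact Bool.noConfusion hms
        obtain ⟨k, hka, hkb⟩ := plusminus p hp m hmQ hpm_ne hsp hms
        omega
      | false =>
        have hlen : ¬ (2 * (p.j - p.i) ≤ n) := by simpa [sRoute] using hsp
        by_cases hpB : p.i ≤ q0.i ∧ q0.i < p.j
        · have hple : p.j ≤ m.j := hmmax p (Finset.mem_filter.2 ⟨hp, hsp, hpB⟩)
          omega
        · omega
    · -- all minus-routed demands' routes contain the arc q0.i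
      have hnB : ∀ p ∈ Q, sRoute n p = false → ¬(p.i ≤ q0.i ∧ q0.i < p.j) := by
        intro p hp hs hcon
        exact hB ⟨p, Finset.mem_filter.2 ⟨hp, hs, hcon⟩⟩
      obtain ⟨b, hbdef⟩ : ∃ b, (q0.i + n / 2 ≤ n ∧ b = q0.i + n / 2) ∨
          (n < q0.i + n / 2 ∧ b = q0.i + n / 2 - n) := by
        by_cases hc : q0.i + n / 2 ≤ n
        · exact ⟨q0.i + n / 2, Or.inl ⟨hc, rfl⟩⟩
        · exact ⟨q0.i + n / 2 - n, Or.inr ⟨by omega, rfl⟩⟩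
      refine ⟨q0.i, b, by omega, by omega, by omega, by omega, ?_⟩
      intro p hp
      have h1 := p.h1i; have h2 := p.hij; have h3 := p.hjn
      cases hsp : sRoute n p with
      | true =>
        have hlen : 2 * (p.j - p.i) ≤ n := by simpa [sRoute] using hsp
        have hle := hx p hp hsp
        have hlt := hxlt p hp hsp
        omega
      | false =>
        have hlen : ¬ (2 * (p.j - p.i) ≤ n) := by simpa [sRoute] using hsp
        have hnotB := hnB p hp hsp
        omega
  · -- all demands are minus-routed: all routes contain arc n
    have hall : ∀ p ∈ Q, ¬ (2 * (p.j - p.i) ≤ n) := by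
      intro p hp hle
      refine hQP ⟨p, Finset.mem_filter.2 ⟨hp, ?_⟩⟩
      simpa [sRoute] using hle
    refine ⟨n, n / 2, by omega, le_rfl, by omega, by omega, ?_⟩
    intro p hp
    have h1 := p.h1i; have h2 := p.hij; have h3 := p.hjn
    have h4 := hall p hp
    omega

/-- Routing each demand along its shorter route and taking a maximum-weight
clique `Q` of the resulting intersection graph yields a 2-approximation: for every
routing `R`, `w(Q) ≤ 2·ω(H_R, w)`. -/
theorem shortest_route_two_approx {n : ℕ} (D : Finset (Demand n)) (w : Demand n → ℕ)
    (hw : ∀ p ∈ D, 0 < w p) (Q : Finset (Demand n)) (hQD : Q ⊆ D)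
    (hclique : ∀ p ∈ Q, ∀ q ∈ Q, p ≠ q →
      (p.arcs (sRoute n p) ∩ q.arcs (sRoute n q)).Nonempty)
    (hmax : ∑ p ∈ Q, w p = cliqueNum D (sRoute n) w) :
    ∀ r : Demand n → Bool, ∑ p ∈ Q, w p ≤ 2 * cliqueNum D r w := by
  intro r
  classical
  rcases Q.eq_empty_or_nonempty with rfl | hQne
  · simp
  obtain ⟨a, b, ha1, han, hb1, hbn, hab⟩ := exists_split Q hQne hclique
  -- every route (in any routing) contains exactly one of the arcs a, b
  have key : ∀ p ∈ Q, (a ∈ Demand.arcs p (r p) ∧ b ∉ Demand.arcs p (r p)) ∨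
      (b ∈ Demand.arcs p (r p) ∧ a ∉ Demand.arcs p (r p)) := by
    intro p hp
    have h := hab p hp
    rw [mem_arcs_iff p (r p) a ha1 han, mem_arcs_iff p (r p) b hb1 hbn]
    cases r p <;> simp only [if_true, if_false, Bool.false_eq_true, Bool.true_eq_false,
      ite_true, ite_false] <;> tauto
  set Qa := Q.filter (fun p => a ∈ Demand.arcs p (r p)) with hQadef
  set Qb := Q.filter (fun p => ¬ a ∈ Demand.arcs p (r p)) with hQbdef
  have hQaclique : ∀ p ∈ Qa, ∀ q ∈ Qa, p ≠ q →
      (Demand.arcs p (r p) ∩ Demand.arcs q (r q)).Nonempty := by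
    intro p hp q hq _
    exact ⟨a, (Finset.mem_filter.1 hp).2, (Finset.mem_filter.1 hq).2⟩
  have hbmem : ∀ p ∈ Qb, b ∈ Demand.arcs p (r p) := by
    intro p hp
    rcases key p (Finset.mem_filter.1 hp).1 with h | h
    · exact absurd h.1 (Finset.mem_filter.1 hp).2
    · exact h.1
  have hQbclique : ∀ p ∈ Qb, ∀ q ∈ Qb, p ≠ q →
      (Demand.arcs p (r p) ∩ Demand.arcs q (r q)).Nonempty := by
    intro p hp q hq _
    exact ⟨b, hbmem p hp, hbmem q hq⟩
  have t1 : ∑ p ∈ Qa, w p ≤ cliqueNum D r w :=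
    sum_le_cliqueNum D r w Qa ((Finset.filter_subset _ _).trans hQD) hQaclique
  have t2 : ∑ p ∈ Qb, w p ≤ cliqueNum D r w :=
    sum_le_cliqueNum D r w Qb ((Finset.filter_subset _ _).trans hQD) hQbclique
  have hsum : ∑ p ∈ Qa, w p + ∑ p ∈ Qb, w p = ∑ p ∈ Q, w p :=
    Finset.sum_filter_add_sum_filter_not Q _ w
  omega
end

section
/- Key splitting inequality for the 2-approximation: if every demand of a set D' ⊆ D has one end in a path P_a and one end in P_b (where P_a, P_b are the two vertex-disjoint paths obtained by removing the arcs a and b from the cycle), then for every routing R of D, w(D') ≤ 2·ω(H_R, w). -/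
open Finset

open Demand

/-- Key splitting inequality: if every demand of `D' ⊆ D` has one end in
`P_a` and one end in `P_b` (the two paths obtained by removing arcs `a` and `b` from the
cycle), then for every routing `R` of `D`, `w(D') ≤ 2·ω(H_R, w)`. -/
theorem splitting_inequality {n : ℕ} (D : Finset (Demand n)) (w : Demand n → ℕ)
    (hw : ∀ p ∈ D, 0 < w p) (a b : ℕ) (h1a : 1 ≤ a) (hab : a < b) (hbn : b ≤ n)
    (D' : Finset (Demand n)) (hD' : D' ⊆ D)
    (hsplit : ∀ p ∈ D',
      (p.i ∈ cycI n (csucc n a) b ∧ p.j ∈ cycI n (csucc n b) a) ∨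
      (p.i ∈ cycI n (csucc n b) a ∧ p.j ∈ cycI n (csucc n a) b)) :
    ∀ r : Demand n → Bool, ∑ p ∈ D', w p ≤ 2 * cliqueNum D r w := by
  intro r
  classical
  have han : a < n := lt_of_lt_of_le hab hbn
  have hca : csucc n a = a + 1 := by simp [csucc, han.ne]
  have hstep : ∀ p ∈ D', a ∈ p.arcs (r p) ∨ b ∈ p.arcs (r p) := by
    intro p hp
    rcases hsplit p hp with ⟨h1, h2⟩ | ⟨h2, h1⟩
    · -- p.i ∈ Icc (a+1) b
      rw [hca] at h1
      rw [show cycI n (a+1) b = Set.Icc (a+1) b from if_pos hab] at h1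
      have hj : b + 1 ≤ p.j := by
        by_cases hbn' : b = n
        · rw [hbn'] at h2
          rw [show csucc n n = 1 from if_pos rfl,
            show cycI n 1 a = Set.Icc 1 a from if_pos h1a] at h2
          have := h1.1; have := h2.2; have := p.hij
          omega
        · rw [show csucc n b = b + 1 from if_neg hbn'] at h2
          rw [show cycI n (b+1) a = Set.Icc (b+1) n ∪ Set.Icc 1 a from
            if_neg (by omega)] at h2
          rcases h2 with h2 | h2
          · exact h2.1
          · have := h1.1; have := h2.2; have := p.hij; omega
      cases hr : r p
      · left
        simp only [Demand.arcs, hr, if_neg Bool.false_ne_true, Demand.arcMinus,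
          Set.mem_setOf_eq]
        left; exact ⟨h1a, by have := h1.1; omega⟩
      · right
        simp only [Demand.arcs, hr, if_pos rfl, Demand.arcPlus, Set.mem_setOf_eq]
        exact ⟨h1.2, by omega⟩ -- hj in scope
    · -- p.j ∈ Icc (a+1) b
      rw [hca] at h1
      rw [show cycI n (a+1) b = Set.Icc (a+1) b from if_pos hab] at h1
      have hi : p.i ≤ a := by
        by_cases hbn' : b = n
        · rw [hbn'] at h2
          rw [show csucc n n = 1 from if_pos rfl,
            show cycI n 1 a = Set.Icc 1 a from if_pos h1a] at h2
          exact h2.2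
        · rw [show csucc n b = b + 1 from if_neg hbn'] at h2
          rw [show cycI n (b+1) a = Set.Icc (b+1) n ∪ Set.Icc 1 a from
            if_neg (by omega)] at h2
          rcases h2 with h2 | h2
          · have := h1.2; have := h2.1; have := p.hij; omega
          · exact h2.2
      cases hr : r p
      · right
        simp only [Demand.arcs, hr, if_neg Bool.false_ne_true, Demand.arcMinus,
          Set.mem_setOf_eq]
        right; exact ⟨h1.2, hbn⟩
      · left
        simp only [Demand.arcs, hr, if_pos rfl, Demand.arcPlus, Set.mem_setOf_eq]
        exact ⟨hi, by have := h1.1; omega⟩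
  have key : ∀ c : ℕ, ∀ C : Finset (Demand n), C ⊆ D →
      (∀ p ∈ C, c ∈ p.arcs (r p)) → ∑ p ∈ C, w p ≤ cliqueNum D r w := by
    intro c C hC hc
    refine Finset.le_sup (f := fun C => ∑ p ∈ C, w p) ?_
    simp only [Finset.mem_filter, Finset.mem_powerset]
    exact ⟨hC, fun p hp q hq _ => ⟨c, hc p hp, hc q hq⟩⟩
  have hsum : ∑ p ∈ D', w p
      = ∑ p ∈ D'.filter (fun p => a ∈ p.arcs (r p)), w p
        + ∑ p ∈ D'.filter (fun p => ¬ a ∈ p.arcs (r p)), w p :=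
    (Finset.sum_filter_add_sum_filter_not D' _ _).symm
  have hAle := key a _ ((Finset.filter_subset (fun p => a ∈ p.arcs (r p)) D').trans hD')
    (fun p hp => (Finset.mem_filter.mp hp).2)
  have hBle := key b _ ((Finset.filter_subset (fun p => ¬ a ∈ p.arcs (r p)) D').trans hD')
    (fun p hp => by
      have h := Finset.mem_filter.mp hp
      rcases hstep p h.1 with h' | h'
      · exact absurd h' h.2
      · exact h')
  omega
end

section
/- Partition reduction, forward direction: Let S = {x_2,...,x_{r+1}} be positive integers with even sum M, and consider the MCRPC instance on the cycle of 2r+4 nodes with pole demands p_1=(1,2) and p_{r+2}=(r+3,r+4) of weight M, and demands p_{2+i}=(3+i, r+5+i) of weight x_{2+i} for 0≤i≤r−1. If there exists T ⊆ S with Σ_{x∈T} x = M/2, then there is a routing R with maximum weighted clique ω(H_R,w) = 3M/2. -/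
open Finset

open Demand

/-- The first pole demand `p₁ = (1,2)` on the cycle of `2r+4` nodes. -/
def pole1 (r : ℕ) : Demand (2 * r + 4) := ⟨1, 2, by omega, by omega, by omega⟩

/-- The second pole demand `p_{r+2} = (r+3, r+4)`. -/
def pole2 (r : ℕ) : Demand (2 * r + 4) := ⟨r + 3, r + 4, by omega, by omega, by omega⟩

/-- The middle demand `p_t = (t+1, t+r+3)` for `2 ≤ t ≤ r+1`. -/
def mid (r t : ℕ) (h2 : 2 ≤ t) (ht : t ≤ r + 1) : Demand (2 * r + 4) :=
  ⟨t + 1, t + r + 3, by omega, by omega, by omega⟩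

/-- The demand set of the partition reduction. -/
def partD (r : ℕ) : Finset (Demand (2 * r + 4)) :=
  {pole1 r, pole2 r} ∪
    (Finset.Icc 2 (r + 1)).attach.image fun t =>
      mid r t.1 (Finset.mem_Icc.mp t.2).1 (Finset.mem_Icc.mp t.2).2

/-- The weights of the partition reduction: the poles get weight `M`, and the middle
demand `p_t = (t+1, t+r+3)` gets weight `x t`. -/
def partW (r : ℕ) (x : ℕ → ℕ) (M : ℕ) : Demand (2 * r + 4) → ℕ := fun p =>
  if p.i = 1 ∨ p.i = r + 3 then M else x (p.i - 1)


/-- A total version of `mid`. -/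
def mid' (r t : ℕ) : Demand (2 * r + 4) :=
  if h : 2 ≤ t ∧ t ≤ r + 1 then mid r t h.1 h.2 else pole1 r

lemma mid'_def {r t : ℕ} (h2 : 2 ≤ t) (ht : t ≤ r + 1) :
    mid' r t = mid r t h2 ht := by simp [mid', h2, ht]

lemma partD_eq (r : ℕ) :
    partD r = insert (pole1 r) (insert (pole2 r)
      ((Finset.Icc 2 (r + 1)).image (mid' r))) := by
  ext p
  simp only [partD, Finset.mem_union, Finset.mem_insert, Finset.mem_image,
    Finset.mem_attach, true_and, Subtype.exists, Finset.mem_singleton]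
  constructor
  · rintro ((rfl | rfl) | ⟨a, ha, rfl⟩)
    · tauto
    · tauto
    · refine Or.inr (Or.inr ⟨a, ha, ?_⟩)
      rw [mid'_def (Finset.mem_Icc.mp ha).1 (Finset.mem_Icc.mp ha).2]
  · rintro (rfl | rfl | ⟨a, ha, rfl⟩)
    · tauto
    · tauto
    · refine Or.inr ⟨a, ha, ?_⟩
      rw [mid'_def (Finset.mem_Icc.mp ha).1 (Finset.mem_Icc.mp ha).2]

lemma pole1_ne_pole2 (r : ℕ) : pole1 r ≠ pole2 r := by
  intro h
  have := congrArg Demand.i h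
  simp [pole1, pole2] at this

lemma pole1_ne_mid' (r : ℕ) {t : ℕ} (h2 : 2 ≤ t) (ht : t ≤ r + 1) :
    pole1 r ≠ mid' r t := by
  intro h
  have := congrArg Demand.i h
  rw [mid'_def h2 ht] at this
  simp [pole1, mid] at this
  omega

lemma pole2_ne_mid' (r : ℕ) {t : ℕ} (h2 : 2 ≤ t) (ht : t ≤ r + 1) :
    pole2 r ≠ mid' r t := by
  intro h
  have := congrArg Demand.i h
  rw [mid'_def h2 ht] at this
  simp [pole2, mid] at this
  omega

lemma mid'_inj (r : ℕ) : ∀ s ∈ Finset.Icc 2 (r + 1), ∀ t ∈ Finset.Icc 2 (r + 1),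
    mid' r s = mid' r t → s = t := by
  intro s hs t ht h
  rw [Finset.mem_Icc] at hs ht
  rw [mid'_def hs.1 hs.2, mid'_def ht.1 ht.2] at h
  have := congrArg Demand.i h
  simpa [mid] using this

/-- Partition reduction, forward direction: if some subset `T` of the given
positive integers (with even total sum `M`) sums to `M/2`, then the partition-reduction
instance has a routing whose maximum weighted clique equals `3M/2`. -/
theorem partition_reduction_forward (r : ℕ) (x : ℕ → ℕ)
    (hx : ∀ t, 2 ≤ t → t ≤ r + 1 → 0 < x t)
    (M : ℕ) (hM : M = ∑ t ∈ Finset.Icc 2 (r + 1), x t) (hMe : Even M)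
    (T : Finset ℕ) (hT : T ⊆ Finset.Icc 2 (r + 1))
    (hsum : ∑ t ∈ T, x t = M / 2) :
    ∃ rt : Demand (2 * r + 4) → Bool,
      cliqueNum (partD r) rt (partW r x M) = 3 * M / 2 := by
  classical
  set rt : Demand (2 * r + 4) → Bool :=
    fun p => if p.i = 1 ∨ p.i = r + 3 then true else decide (p.i - 1 ∈ T) with hrt
  refine ⟨rt, ?_⟩
  obtain ⟨m, hm⟩ := hMe
  -- sum facts
  have hfilterT : (Finset.Icc 2 (r + 1)).filter (fun t => t ∈ T) = T := by
    ext t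
    simp only [Finset.mem_filter]
    exact ⟨fun h => h.2, fun h => ⟨hT h, h⟩⟩
  have hsumT : ∑ t ∈ (Finset.Icc 2 (r + 1)).filter (fun t => t ∈ T), x t = M / 2 := by
    rw [hfilterT]; exact hsum
  have hsumNotT : ∑ t ∈ (Finset.Icc 2 (r + 1)).filter (fun t => t ∉ T), x t = M / 2 := by
    have h := Finset.sum_filter_add_sum_filter_not (Finset.Icc 2 (r + 1)) (fun t => t ∈ T) x
    rw [hfilterT, hsum, ← hM] at h
    omega
  -- routing values
  have hrt1 : rt (pole1 r) = true := by simp [hrt, pole1]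
  have hrt2 : rt (pole2 r) = true := by simp [hrt, pole2]
  have hrtm : ∀ t, 2 ≤ t → t ≤ r + 1 → rt (mid' r t) = decide (t ∈ T) := by
    intro t h2 ht
    rw [mid'_def h2 ht]
    simp only [hrt, mid]
    rw [if_neg (by omega)]
    norm_num
  -- weight values
  have hw1 : partW r x M (pole1 r) = M := by simp [partW, pole1]
  have hw2 : partW r x M (pole2 r) = M := by simp [partW, pole2]
  have hwm : ∀ t, 2 ≤ t → t ≤ r + 1 → partW r x M (mid' r t) = x t := by
    intro t h2 ht
    rw [mid'_def h2 ht]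
    show (if t + 1 = 1 ∨ t + 1 = r + 3 then M else x (t + 1 - 1)) = x t
    rw [if_neg (by omega)]
    norm_num
  -- sums over images of mids
  have himgsum : ∀ s : Finset ℕ, s ⊆ Finset.Icc 2 (r + 1) →
      ∑ p ∈ s.image (mid' r), partW r x M p = ∑ t ∈ s, x t := by
    intro s hs
    rw [Finset.sum_image (fun a ha b hb h => mid'_inj r a (hs ha) b (hs hb) h)]
    refine Finset.sum_congr rfl fun t ht => ?_
    have := Finset.mem_Icc.mp (hs ht)
    exact hwm t this.1 this.2
  -- lower bound
  have hlow : 3 * M / 2 ≤ cliqueNum (partD r) rt (partW r x M) := by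
    set C₀ : Finset (Demand (2 * r + 4)) :=
      insert (pole1 r) (((Finset.Icc 2 (r + 1)).filter (fun t => t ∉ T)).image (mid' r))
      with hC0
    have hmem1 : ∀ p ∈ C₀, (1 : ℕ) ∈ p.arcs (rt p) := by
      intro p hp
      rcases Finset.mem_insert.mp hp with rfl | hp
      · rw [hrt1]
        simp [Demand.arcs, Demand.arcPlus, pole1]
      · obtain ⟨t, htm, rfl⟩ := Finset.mem_image.mp hp
        rw [Finset.mem_filter, Finset.mem_Icc] at htm
        rw [hrtm t htm.1.1 htm.1.2, decide_eq_false htm.2, mid'_def htm.1.1 htm.1.2]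
        simp only [Demand.arcs, Demand.arcMinus, mid, Set.mem_setOf_eq,
          Bool.false_eq_true, if_false]
        omega
    have hp1img : pole1 r ∉ ((Finset.Icc 2 (r + 1)).filter (fun t => t ∉ T)).image (mid' r) := by
      intro h
      obtain ⟨t, htm, h⟩ := Finset.mem_image.mp h
      have := Finset.mem_Icc.mp (Finset.filter_subset _ _ htm)
      exact pole1_ne_mid' r this.1 this.2 h.symm
    have hC0sub : C₀ ⊆ partD r := by
      rw [partD_eq]
      intro p hp
      rcases Finset.mem_insert.mp hp with rfl | hp
      · exact Finset.mem_insert_self _ _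
      · obtain ⟨t, htm, rfl⟩ := Finset.mem_image.mp hp
        refine Finset.mem_insert_of_mem (Finset.mem_insert_of_mem ?_)
        exact Finset.mem_image.mpr ⟨t, Finset.filter_subset _ _ htm, rfl⟩
    have hC0clq : ∀ p ∈ C₀, ∀ q ∈ C₀, p ≠ q →
        ((p : Demand (2 * r + 4)).arcs (rt p) ∩ q.arcs (rt q)).Nonempty := by
      intro p hp q hq _
      exact ⟨1, hmem1 p hp, hmem1 q hq⟩
    have hsum0 : ∑ p ∈ C₀, partW r x M p = 3 * M / 2 := by
      rw [hC0, Finset.sum_insert hp1img, hw1,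
        himgsum _ (Finset.filter_subset _ _), hsumNotT]
      omega
    calc 3 * M / 2 = ∑ p ∈ C₀, partW r x M p := hsum0.symm
      _ ≤ _ := by
          unfold cliqueNum
          refine Finset.le_sup (f := fun C => ∑ p ∈ C, partW r x M p) ?_
          simp only [Finset.mem_filter, Finset.mem_powerset]
          exact ⟨hC0sub, hC0clq⟩
  -- upper bound
  have hupp : cliqueNum (partD r) rt (partW r x M) ≤ 3 * M / 2 := by
    unfold cliqueNum
    apply Finset.sup_le
    intro C hC
    simp only [Finset.mem_filter, Finset.mem_powerset] at hC
    obtain ⟨hCsub, hclq⟩ := hC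
    have hsplit := Finset.sum_inter_add_sum_sdiff C {pole1 r, pole2 r} (partW r x M)
    set C' := C \ {pole1 r, pole2 r} with hC'
    have hmidC' : ∀ p ∈ C', ∃ t, 2 ≤ t ∧ t ≤ r + 1 ∧ p = mid' r t := by
      intro p hp
      rw [hC', Finset.mem_sdiff] at hp
      have hpD := hCsub hp.1
      rw [partD_eq] at hpD
      rcases Finset.mem_insert.mp hpD with rfl | hpD
      · exact absurd (by simp) hp.2
      rcases Finset.mem_insert.mp hpD with rfl | hpD
      · exact absurd (by simp) hp.2
      obtain ⟨t, htm, rfl⟩ := Finset.mem_image.mp hpD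
      rw [Finset.mem_Icc] at htm
      exact ⟨t, htm.1, htm.2, rfl⟩
    have hC'mem : ∀ p ∈ C', p ∈ C := fun p hp => (Finset.mem_sdiff.mp hp).1
    have hnotboth : ¬(pole1 r ∈ C ∧ pole2 r ∈ C) := by
      rintro ⟨h1, h2⟩
      obtain ⟨k, hk1, hk2⟩ := hclq _ h1 _ h2 (pole1_ne_pole2 r)
      rw [hrt1] at hk1
      rw [hrt2] at hk2
      simp [Demand.arcs, Demand.arcPlus, pole1, pole2] at hk1 hk2
      omega
    -- if pole1 ∈ C, all mids of C avoid T
    have hkey1 : pole1 r ∈ C → ∀ p ∈ C', ∃ t, t ∈ (Finset.Icc 2 (r + 1)).filter (fun t => t ∉ T) ∧ p = mid' r t := by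
      intro h1 p hp
      obtain ⟨t, h2, ht, rfl⟩ := hmidC' p hp
      refine ⟨t, Finset.mem_filter.mpr ⟨Finset.mem_Icc.mpr ⟨h2, ht⟩, ?_⟩, rfl⟩
      intro htT
      obtain ⟨k, hk1, hk2⟩ := hclq _ h1 _ (hC'mem _ hp) (pole1_ne_mid' r h2 ht)
      rw [hrt1] at hk1
      rw [hrtm t h2 ht, decide_eq_true htT, mid'_def h2 ht] at hk2
      simp [Demand.arcs, Demand.arcPlus, pole1, mid] at hk1 hk2
      omega
    have hkey2 : pole2 r ∈ C → ∀ p ∈ C', ∃ t, t ∈ (Finset.Icc 2 (r + 1)).filter (fun t => t ∈ T) ∧ p = mid' r t := by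
      intro h2p p hp
      obtain ⟨t, h2, ht, rfl⟩ := hmidC' p hp
      refine ⟨t, Finset.mem_filter.mpr ⟨Finset.mem_Icc.mpr ⟨h2, ht⟩, ?_⟩, rfl⟩
      by_contra htT
      obtain ⟨k, hk1, hk2⟩ := hclq _ h2p _ (hC'mem _ hp) (pole2_ne_mid' r h2 ht)
      rw [hrt2] at hk1
      rw [hrtm t h2 ht, decide_eq_false htT, mid'_def h2 ht] at hk2
      simp [Demand.arcs, Demand.arcPlus, Demand.arcMinus, pole2, mid] at hk1 hk2
      omega
    have hC'sub : ∀ s : Finset ℕ, (∀ p ∈ C', ∃ t, t ∈ s ∧ p = mid' r t) →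
        C' ⊆ s.image (mid' r) := by
      intro s h p hp
      obtain ⟨t, hts, rfl⟩ := h p hp
      exact Finset.mem_image.mpr ⟨t, hts, rfl⟩
    -- bound the intersection with the poles
    have hinterbound : ∑ p ∈ C ∩ {pole1 r, pole2 r}, partW r x M p ≤ M := by
      by_cases h1 : pole1 r ∈ C
      · have h2 : pole2 r ∉ C := fun h2 => hnotboth ⟨h1, h2⟩
        have : C ∩ {pole1 r, pole2 r} ⊆ {pole1 r} := by
          intro q hq
          rw [Finset.mem_inter, Finset.mem_insert, Finset.mem_singleton] at hq
          rcases hq.2 with rfl | rfl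
          · exact Finset.mem_singleton_self _
          · exact absurd hq.1 h2
        calc ∑ p ∈ C ∩ {pole1 r, pole2 r}, partW r x M p
            ≤ ∑ p ∈ {pole1 r}, partW r x M p := Finset.sum_le_sum_of_subset this
          _ = M := by rw [Finset.sum_singleton, hw1]
      · have : C ∩ {pole1 r, pole2 r} ⊆ {pole2 r} := by
          intro q hq
          rw [Finset.mem_inter, Finset.mem_insert, Finset.mem_singleton] at hq
          rcases hq.2 with rfl | rfl
          · exact absurd hq.1 h1
          · exact Finset.mem_singleton_self _
        calc ∑ p ∈ C ∩ {pole1 r, pole2 r}, partW r x M p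
            ≤ ∑ p ∈ {pole2 r}, partW r x M p := Finset.sum_le_sum_of_subset this
          _ = M := by rw [Finset.sum_singleton, hw2]
    -- bound the sum over the mids
    have hmidbound : ∑ p ∈ C', partW r x M p ≤ M := by
      have hsub := hC'sub (Finset.Icc 2 (r + 1)) (fun p hp => by
        obtain ⟨t, h2, ht, rfl⟩ := hmidC' p hp
        exact ⟨t, Finset.mem_Icc.mpr ⟨h2, ht⟩, rfl⟩)
      calc ∑ p ∈ C', partW r x M p
          ≤ ∑ p ∈ (Finset.Icc 2 (r + 1)).image (mid' r), partW r x M p :=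
            Finset.sum_le_sum_of_subset hsub
        _ = M := by rw [himgsum _ (Finset.Subset.refl _), ← hM]
    have hmidbound2 : (pole1 r ∈ C ∨ pole2 r ∈ C) → ∑ p ∈ C', partW r x M p ≤ M / 2 := by
      rintro (h1 | h2)
      · have hsub := hC'sub _ (hkey1 h1)
        calc ∑ p ∈ C', partW r x M p
            ≤ ∑ p ∈ ((Finset.Icc 2 (r + 1)).filter (fun t => t ∉ T)).image (mid' r),
                partW r x M p := Finset.sum_le_sum_of_subset hsub
          _ = M / 2 := by rw [himgsum _ (Finset.filter_subset _ _), hsumNotT]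
      · have hsub := hC'sub _ (hkey2 h2)
        calc ∑ p ∈ C', partW r x M p
            ≤ ∑ p ∈ ((Finset.Icc 2 (r + 1)).filter (fun t => t ∈ T)).image (mid' r),
                partW r x M p := Finset.sum_le_sum_of_subset hsub
          _ = M / 2 := by rw [himgsum _ (Finset.filter_subset _ _), hsumT]
    by_cases hp : pole1 r ∈ C ∨ pole2 r ∈ C
    · have := hmidbound2 hp
      omega
    · push_neg at hp
      have hempty : C ∩ {pole1 r, pole2 r} = ∅ := by
        rw [Finset.eq_empty_iff_forall_notMem]
        intro q hq
        rw [Finset.mem_inter, Finset.mem_insert, Finset.mem_singleton] at hq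
        rcases hq.2 with rfl | rfl
        · exact hp.1 hq.1
        · exact hp.2 hq.1
      rw [hempty, Finset.sum_empty] at hsplit
      omega
  omega
end

section
/- If demand p ∈ D is such that p⁺ does not contain both ends of any other demand of D, then the vertex of H corresponding to the route p⁻ is universal: p⁻ shares an arc with every route q⁺ and q⁻ of every demand q ∈ D with e(q) ≠ e(p). -/
open Finset

open Demand

/-- If `p⁺` contains both ends of no demand of `D` other than (multiples of)
`p`, then the vertex of `H` corresponding to `p⁻` is universal: `p⁻` shares an arc with
every route of every demand `q ∈ D` with `e(q) ≠ e(p)`. -/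
theorem minus_route_universal {n : ℕ} (D : Finset (Demand n)) (p : Demand n) (hp : p ∈ D)
    (hext : ∀ q ∈ D, q.ends ≠ p.ends → ¬ q.ends ⊆ p.VPlus) :
    ∀ q ∈ D, q.ends ≠ p.ends →
      (p.arcMinus ∩ q.arcPlus).Nonempty ∧ (p.arcMinus ∩ q.arcMinus).Nonempty := by
  intro q hq hne
  have hsub := hext q hq hne
  have hcase : q.i < p.i ∨ p.j < q.j := by
    by_contra h
    push_neg at h
    obtain ⟨h1, h2⟩ := h
    apply hsub
    intro v hv
    rcases hv with rfl | hv
    · exact ⟨h1, le_trans q.hij.le h2⟩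
    · rcases hv with rfl
      exact ⟨le_trans h1 q.hij.le, h2⟩
  constructor
  · rcases hcase with h | h
    · exact ⟨q.i, Or.inl ⟨q.h1i, h⟩, le_refl _, q.hij⟩
    · refine ⟨q.j - 1, Or.inr ⟨?_, ?_⟩, ?_, ?_⟩
      · omega
      · have := q.hjn; omega
      · have := q.hij; omega
      · have := q.hij; omega
  · refine ⟨n, Or.inr ⟨p.hjn, le_refl n⟩, Or.inr ⟨q.hjn, le_refl n⟩⟩
end

section
/- If p ∈ D is a demand such that p⁺ contains no demand's both ends (other than possibly p itself), then for any routing R with R_p = p⁻, the routing R' equal to R except R'_p = p⁺ satisfies ω(H_{R'}, w) ≤ ω(H_R, w). -/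
open Finset

open Demand

lemma Demand.hit_minus {n : ℕ} {p q : Demand n} (hq : q.i < p.i ∨ p.j < q.j) (b : Bool) :
    (q.arcs b ∩ p.arcMinus).Nonempty := by
  cases b with
  | false =>
    exact ⟨n, Or.inr ⟨q.hjn, le_rfl⟩, Or.inr ⟨p.hjn, le_rfl⟩⟩
  | true =>
    rcases hq with h | h
    · exact ⟨q.i, ⟨le_rfl, q.hij⟩, Or.inl ⟨q.h1i, h⟩⟩
    · rcases le_or_gt p.j q.i with h2 | h2
      · exact ⟨q.i, ⟨le_rfl, q.hij⟩, Or.inr ⟨h2, q.hij.le.trans q.hjn⟩⟩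
      · exact ⟨p.j, ⟨h2.le, h⟩, Or.inr ⟨le_rfl, p.hjn⟩⟩

lemma Demand.ends_ne_of_ne {n : ℕ} {p q : Demand n} (h : q ≠ p) : q.ends ≠ p.ends := by
  intro he
  apply h
  have := Set.ext_iff.mp he
  have h1 := (this q.i).mp (Or.inl rfl)
  have h2 := (this q.j).mp (Or.inr rfl)
  have h3 := (this p.i).mpr (Or.inl rfl)
  have h4 := (this p.j).mpr (Or.inr rfl)
  simp only [Demand.ends, Set.mem_insert_iff, Set.mem_singleton_iff] at h1 h2 h3 h4
  have hq := q.hij; have hp := p.hij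
  cases q; cases p; simp_all; omega

lemma Demand.outside_of_not_subset {n : ℕ} {p q : Demand n} (h : ¬ q.ends ⊆ p.VPlus) :
    q.i < p.i ∨ p.j < q.j := by
  simp only [Demand.ends, Demand.VPlus, Set.subset_def, Set.mem_insert_iff,
    Set.mem_singleton_iff, Set.mem_setOf_eq] at h
  push_neg at h
  have hq := q.hij
  by_contra hc
  push_neg at hc
  obtain ⟨v, hv, hv2⟩ := h
  rcases hv with rfl | rfl <;> omega

/-- If `p⁺` contains both ends of no demand of `D` other than (multiples of)
`p`, then rerouting `p` from `p⁻` to `p⁺` does not increase the maximum clique weight. -/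
theorem reroute_extreme_le {n : ℕ} (D : Finset (Demand n)) (w : Demand n → ℕ)
    (p : Demand n) (hp : p ∈ D)
    (hext : ∀ q ∈ D, q.ends ≠ p.ends → ¬ q.ends ⊆ p.VPlus)
    (r : Demand n → Bool) (hr : r p = false) :
    cliqueNum D (Function.update r p true) w ≤ cliqueNum D r w := by
  classical
  apply Finset.sup_mono
  intro C hC
  simp only [Finset.mem_filter, Finset.mem_powerset] at hC ⊢
  obtain ⟨hCD, hcl⟩ := hC
  refine ⟨hCD, fun a ha b hb hab => ?_⟩
  have key : ∀ q ∈ D, q ≠ p → ∀ c : Bool, (q.arcs c ∩ p.arcs (r p)).Nonempty := by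
    intro q hq hqp c
    rw [hr]
    have := hext q hq (Demand.ends_ne_of_ne hqp)
    have := Demand.hit_minus (Demand.outside_of_not_subset this) (p := p) c
    simpa [Demand.arcs] using this
  by_cases hap : a = p
  · subst hap
    have hbp : b ≠ a := fun h => hab h.symm
    have := key b (hCD hb) hbp (r b)
    rw [Set.inter_comm] at this
    exact this
  · by_cases hbp : b = p
    · subst hbp
      exact key a (hCD ha) hap (r a)
    · have := hcl a ha b hb hab
      rwa [Function.update_of_ne hap, Function.update_of_ne hbp] at this
end
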